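/- arXiv:2310.20037 — 7 statements merged into one kernel-verified Lean document; each statement's English description precedes it below -/
import Mathlib

section
/- Let Z be a Polish space, H a Hilbert space, g : Z → H bounded Borel measurable, f : H → ℝ convex and differentiable with L-Lipschitz gradient. Let P be a convex set of Borel probability measures on Z, μ̄ ∈ P, and λ̄ = ∇f(∫_Z g dμ̄). Then μ̄ minimizes μ ↦ f(∫_Z g dμ) over P if and only if ∫_Z ⟨λ̄, g⟩ dμ̄ = inf_{μ ∈ P} ∫_Z ⟨λ̄, g⟩ dμ. -/
open MeasureTheory Set
open scoped RealInnerProductSpace NNReal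

/-!
The barycenter map `μ ↦ ∫ g dμ` sends the convex set `P` onto a convex set `S ⊆ H`, so the problem
is to minimize the convex differentiable function `f` over `S` at `a = ∫ g dμ̄`. At a minimizer,
Fermat's rule along the segments `[a, b] ⊆ S` gives `0 ≤ ⟪∇f(a), b - a⟫`; conversely, the gradient
inequality `⟪∇f(a), b - a⟫ ≤ f b - f a` of a convex function shows that this condition suffices.
Since `∫ ⟪λ̄, g⟫ dμ = ⟪λ̄, ∫ g dμ⟫`, the condition says that `μ̄` minimizes the linearized cost.
-/

theorem eq_csInf_iff_forall_le {α : Type*} [ConditionallyCompleteLattice α] {s : Set α} {a : α}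
    (hs : BddBelow s) (ha : a ∈ s) : a = sInf s ↔ ∀ b ∈ s, a ≤ b :=
  ⟨fun h _ hb => h ▸ csInf_le hs hb, fun h => (IsLeast.csInf_eq ⟨ha, h⟩).symm⟩

section FirstOrder

variable {E : Type*} [NormedAddCommGroup E] [NormedSpace ℝ E] {f : E → ℝ} {f' : E →L[ℝ] ℝ}
  {s : Set E} {a b : E}

theorem ConvexOn.le_sub_of_hasFDerivAt (hf : ConvexOn ℝ s f) (ha : a ∈ s) (hb : b ∈ s)
    (hd : HasFDerivAt f f' a) : f' (b - a) ≤ f b - f a := by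
  let ℓ : ℝ →ᵃ[ℝ] E := AffineMap.lineMap a b
  have hℓ : HasDerivAt (f ∘ ℓ) (f' (b - a)) 0 := by
    have hd' : HasFDerivAt f f' (ℓ 0) := by simpa [ℓ] using hd
    simpa using hd'.comp_hasDerivAt 0 AffineMap.hasDerivAt_lineMap
  have := (hf.comp_affineMap ℓ).le_slope_of_hasDerivAt (x := 0) (y := 1) (by simpa [ℓ])
    (by simpa [ℓ]) one_pos hℓ
  simpa [slope_def_field, ℓ] using this

theorem IsMinOn.hasFDerivAt_sub_nonneg (hs : Convex ℝ s) (hmin : IsMinOn f s a) (ha : a ∈ s)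
    (hb : b ∈ s) (hd : HasFDerivAt f f' a) : 0 ≤ f' (b - a) :=
  hmin.localize.hasFDerivWithinAt_nonneg hd.hasFDerivWithinAt
    (sub_mem_posTangentConeAt_of_segment_subset (hs.segment_subset ha hb))

theorem ConvexOn.isMinOn_iff_isMinOn_of_hasFDerivAt (hs : Convex ℝ s) (hf : ConvexOn ℝ s f)
    (ha : a ∈ s) (hd : HasFDerivAt f f' a) : IsMinOn f s a ↔ IsMinOn f' s a := by
  refine ⟨fun hmin => isMinOn_iff.2 fun b hb => ?_, fun hmin => isMinOn_iff.2 fun b hb => ?_⟩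
  · simpa [sub_nonneg] using hmin.hasFDerivAt_sub_nonneg hs ha hb hd
  · have hgrad := hf.le_sub_of_hasFDerivAt ha hb hd
    rw [map_sub] at hgrad
    linarith [isMinOn_iff.1 hmin b hb]

end FirstOrder

section Barycenter

variable {Z E : Type*} [MeasurableSpace Z] [NormedAddCommGroup E] [NormedSpace ℝ E] {g : Z → E}

theorem integral_ofReal_smul_add_ofReal_smul {μ ν : Measure Z} (hμ : Integrable g μ)
    (hν : Integrable g ν) {s t : ℝ} (hs : 0 ≤ s) (ht : 0 ≤ t) :
    ∫ z, g z ∂(ENNReal.ofReal s • μ + ENNReal.ofReal t • ν) =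
      s • ∫ z, g z ∂μ + t • ∫ z, g z ∂ν := by
  rw [integral_add_measure (hμ.smul_measure ENNReal.ofReal_ne_top)
      (hν.smul_measure ENNReal.ofReal_ne_top), integral_smul_measure, integral_smul_measure,
    ENNReal.toReal_ofReal hs, ENNReal.toReal_ofReal ht]

theorem convex_image_integral {P : Set (Measure Z)} (hint : ∀ μ ∈ P, Integrable g μ)
    (hP : ∀ μ ∈ P, ∀ ν ∈ P, ∀ t : ℝ, 0 ≤ t → t ≤ 1 →
      ENNReal.ofReal t • μ + ENNReal.ofReal (1 - t) • ν ∈ P) :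
    Convex ℝ ((fun μ => ∫ z, g z ∂μ) '' P) := by
  rintro _ ⟨μ, hμ, rfl⟩ _ ⟨ν, hν, rfl⟩ s t hs ht hst
  obtain rfl : t = 1 - s := by linarith
  exact ⟨_, hP μ hμ ν hν s hs (by linarith),
    integral_ofReal_smul_add_ofReal_smul (hint μ hμ) (hint ν hν) hs ht⟩

theorem bddBelow_image_integral {h : Z → ℝ} {C : ℝ} (hC : ∀ z, ‖h z‖ ≤ C)
    {P : Set (Measure Z)} (hP : ∀ μ ∈ P, IsProbabilityMeasure μ) :
    BddBelow ((fun μ => ∫ z, h z ∂μ) '' P) := by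
  refine ⟨-C, ?_⟩
  rintro _ ⟨μ, hμ, rfl⟩
  have := hP μ hμ
  have := norm_integral_le_of_norm_le_const (μ := μ) (ae_of_all _ hC)
  simp only [probReal_univ, mul_one, Real.norm_eq_abs] at this
  exact neg_le_of_abs_le this

end Barycenter

theorem stmt_6_general {H Z : Type*}
    [NormedAddCommGroup H] [InnerProductSpace ℝ H] [CompleteSpace H]
    [SecondCountableTopology H] [MeasurableSpace H] [BorelSpace H]
    [MeasurableSpace Z]
    (g : Z → H) (hgm : Measurable g) (M : ℝ) (hM : ∀ z, ‖g z‖ ≤ M)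
    (f : H → ℝ) (f' : H → H)
    (hconv : ConvexOn ℝ Set.univ f)
    (hdiff : ∀ x, HasGradientAt f (f' x) x)
    (P : Set (Measure Z)) (hP : ∀ μ ∈ P, IsProbabilityMeasure μ)
    (hPconv : ∀ μ ∈ P, ∀ ν ∈ P, ∀ t : ℝ, 0 ≤ t → t ≤ 1 →
      ENNReal.ofReal t • μ + ENNReal.ofReal (1 - t) • ν ∈ P)
    (μb : Measure Z) (hμb : μb ∈ P)
    (lamb : H) (hlamb : lamb = f' (∫ z, g z ∂μb)) :
    (∀ μ ∈ P, f (∫ z, g z ∂μb) ≤ f (∫ z, g z ∂μ)) ↔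
      ∫ z, ⟪lamb, g z⟫ ∂μb = sInf ((fun μ => ∫ z, ⟪lamb, g z⟫ ∂μ) '' P) := by
  have hint : ∀ μ ∈ P, Integrable g μ := fun μ hμ =>
    have := hP μ hμ; .of_bound hgm.aestronglyMeasurable M (ae_of_all _ hM)
  have hS : Convex ℝ ((fun μ => ∫ z, g z ∂μ) '' P) := convex_image_integral hint hPconv
  have hopt := (hconv.subset (subset_univ _) hS).isMinOn_iff_isMinOn_of_hasFDerivAt hS
    (mem_image_of_mem _ hμb) (hdiff _).hasFDerivAt
  have hbdd := bddBelow_image_integral (fun z => (norm_inner_le_norm lamb (g z)).trans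
    (mul_le_mul_of_nonneg_left (hM z) (norm_nonneg lamb))) hP
  rw [eq_csInf_iff_forall_le hbdd (mem_image_of_mem _ hμb)]
  simp only [isMinOn_iff, forall_mem_image, InnerProductSpace.toDual_apply_apply, ← hlamb]
    at hopt ⊢
  rw [hopt]
  refine forall₂_congr fun μ hμ => ?_
  rw [integral_inner (hint μ hμ), integral_inner (hint μb hμb)]

/-- First-order optimality condition for the mean field optimization problem
`inf_{μ ∈ P} f(∫ g dμ)` over a convex set `P` of Borel probability measures:
`μ̄` is a minimizer iff it minimizes the linearized cost `μ ↦ ∫ ⟨λ̄, g⟩ dμ`,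
where `λ̄ = ∇f(∫ g dμ̄)`. -/
theorem stmt_6 {H Z : Type*}
    [NormedAddCommGroup H] [InnerProductSpace ℝ H] [CompleteSpace H]
    [SecondCountableTopology H] [MeasurableSpace H] [BorelSpace H]
    [MetricSpace Z] [CompleteSpace Z] [SecondCountableTopology Z]
    [MeasurableSpace Z] [BorelSpace Z]
    (g : Z → H) (hgm : Measurable g) (M : ℝ) (hM : ∀ z, ‖g z‖ ≤ M)
    (f : H → ℝ) (f' : H → H)
    (hconv : ConvexOn ℝ Set.univ f)
    (hdiff : ∀ x, HasGradientAt f (f' x) x)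
    (L : ℝ≥0) (hlip : LipschitzWith L f')
    (P : Set (Measure Z)) (hP : ∀ μ ∈ P, IsProbabilityMeasure μ)
    (hPconv : ∀ μ ∈ P, ∀ ν ∈ P, ∀ t : ℝ, 0 ≤ t → t ≤ 1 →
      ENNReal.ofReal t • μ + ENNReal.ofReal (1 - t) • ν ∈ P)
    (μb : Measure Z) (hμb : μb ∈ P)
    (lamb : H) (hlamb : lamb = f' (∫ z, g z ∂μb)) :
    (∀ μ ∈ P, f (∫ z, g z ∂μb) ≤ f (∫ z, g z ∂μ)) ↔
      ∫ z, ⟪lamb, g z⟫ ∂μb = sInf ((fun μ => ∫ z, ⟪lamb, g z⟫ ∂μ) '' P) :=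
  stmt_6_general g hgm M hM f f' hconv hdiff P hP hPconv μb hμb lamb hlamb
end

section
/- Let Z be a Polish space, g : Z → H bounded Borel measurable into a separable Hilbert space, f : H → ℝ convex with L-Lipschitz gradient, and 𝒫_m(Z) the measures with prescribed marginal m. If (μₙ) is a minimizing sequence for inf_{μ ∈ 𝒫_m(Z)} f(∫_Z g dμ) that is tight, then every narrow accumulation point μ̄ of (μₙ) belongs to 𝒫_m(Z) and is a minimizer, provided the function z ↦ ⟨∇f(∫ g dμ̄), g(z)⟩ is lower semi-continuous and bounded below. -/
/-!
Feasibility passes to the narrow limit by the portmanteau theorem: `Zᶜ` is open, so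
`μ̄(Zᶜ) ≤ liminf μₙ(Zᶜ) = 0`, and the first marginal depends continuously on the measure.
For optimality put `a = ∫ g dμ̄` and `u = ∇f(a)`. Convexity gives the supporting-hyperplane bound
`f(∫ g dμ) ≥ f(a) + ∫ ⟪u, g⟫ dμ - ∫ ⟪u, g⟫ dμ̄` for every `μ`, and since `⟪u, g⟫` is lower
semicontinuous and bounded, `μ ↦ ∫ ⟪u, g⟫ dμ` is narrowly lower semicontinuous. Along the
subsequence the right-hand side is therefore eventually at least `f(a) - ε`, while the left-hand
side tends to the infimum; so `f(a)` is at most the infimum.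
-/

open MeasureTheory Filter Topology Set
open scoped RealInnerProductSpace ENNReal NNReal

theorem ConvexOn.add_fderiv_sub_le {E : Type*} [NormedAddCommGroup E] [NormedSpace ℝ E]
    {s : Set E} {f : E → ℝ} (hf : ConvexOn ℝ s f) {f' : E →L[ℝ] ℝ} {x y : E} (hxs : x ∈ s)
    (hys : y ∈ s) (hx : HasFDerivAt f f' x) : f x + f' (y - x) ≤ f y := by
  let ℓ : ℝ →ᵃ[ℝ] E := AffineMap.lineMap x y
  have hxℓ : HasFDerivAt f f' (ℓ 0) := by simpa [ℓ] using hx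
  have hderiv : HasDerivAt (f ∘ ℓ) (f' (y - x)) 0 :=
    hxℓ.comp_hasDerivAt 0 AffineMap.hasDerivAt_lineMap
  have := (hf.comp_affineMap ℓ).le_slope_of_hasDerivAt (by simpa [ℓ] using hxs)
    (by simpa [ℓ] using hys) one_pos hderiv
  rw [slope_def_field] at this
  simp only [Function.comp_apply, ℓ, AffineMap.lineMap_apply_zero,
    AffineMap.lineMap_apply_one] at this
  linarith

theorem ConvexOn.add_inner_gradient_sub_le {H : Type*} [NormedAddCommGroup H]
    [InnerProductSpace ℝ H] [CompleteSpace H] {s : Set H} {f : H → ℝ} (hf : ConvexOn ℝ s f)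
    {f' x y : H} (hxs : x ∈ s) (hys : y ∈ s) (hx : HasGradientAt f f' x) :
    f x + ⟪f', y - x⟫ ≤ f y := by
  simpa using hf.add_fderiv_sub_le hxs hys hx.hasFDerivAt

namespace MeasureTheory

variable {Ω ι : Type*} [MeasurableSpace Ω] [TopologicalSpace Ω] [OpensMeasurableSpace Ω]
  {L : Filter ι} {h : Ω → ℝ}

theorem lintegral_le_liminf_lintegral_of_lowerSemicontinuous [L.IsCountablyGenerated]
    {μ : Measure Ω} {μs : ι → Measure Ω} (hh : LowerSemicontinuous h) (h_nn : 0 ≤ h)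
    (h_opens : ∀ G, IsOpen G → μ G ≤ L.liminf (fun i ↦ μs i G)) :
    ∫⁻ x, ENNReal.ofReal (h x) ∂μ ≤ L.liminf (fun i ↦ ∫⁻ x, ENNReal.ofReal (h x) ∂(μs i)) := by
  simp_rw [lintegral_eq_lintegral_meas_lt _ (Eventually.of_forall h_nn)
    hh.measurable.aemeasurable]
  calc ∫⁻ t in Ioi 0, μ {x | t < h x}
      ≤ ∫⁻ t in Ioi 0, L.liminf (fun i ↦ μs i {x | t < h x}) :=
        lintegral_mono fun t ↦ h_opens _ (hh.isOpen_preimage t)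
    _ ≤ L.liminf (fun i ↦ ∫⁻ t in Ioi 0, μs i {x | t < h x}) :=
        lintegral_liminf_le fun _ ↦ Antitone.measurable fun _ _ hst ↦
          measure_mono fun _ hx ↦ hst.trans_lt hx

theorem integral_le_liminf_integral_of_lowerSemicontinuous [L.IsCountablyGenerated] [L.NeBot]
    {μ : Measure Ω} {μs : ι → Measure Ω} [∀ i, IsProbabilityMeasure (μs i)]
    (hh : LowerSemicontinuous h) (h_nn : 0 ≤ h) {C : ℝ} (hC : ∀ x, h x ≤ C)
    (h_opens : ∀ G, IsOpen G → μ G ≤ L.liminf (fun i ↦ μs i G)) :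
    ∫ x, h x ∂μ ≤ L.liminf (fun i ↦ ∫ x, h x ∂(μs i)) := by
  have h_int (ν : Measure Ω) : ∫ x, h x ∂ν = (∫⁻ x, ENNReal.ofReal (h x) ∂ν).toReal :=
    integral_eq_lintegral_of_nonneg_ae (Eventually.of_forall h_nn)
      hh.measurable.aestronglyMeasurable
  have h_bound (i : ι) : ∫⁻ x, ENNReal.ofReal (h x) ∂(μs i) ≤ ENNReal.ofReal C := by
    simpa using lintegral_mono (μ := μs i) fun x ↦ ENNReal.ofReal_le_ofReal (hC x)
  simp_rw [h_int, ENNReal.liminf_toReal_eq ENNReal.ofReal_ne_top (Eventually.of_forall h_bound)]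
  refine ENNReal.toReal_mono (ne_top_of_le_ne_top (ENNReal.ofReal_ne_top (r := C)) ?_)
    (lintegral_le_liminf_lintegral_of_lowerSemicontinuous hh h_nn h_opens)
  exact liminf_le_of_frequently_le' (Frequently.of_forall h_bound)

theorem ProbabilityMeasure.eventually_lt_integral_of_tendsto [HasOuterApproxClosed Ω]
    [L.IsCountablyGenerated] [L.NeBot] {μ : ProbabilityMeasure Ω}
    {μs : ι → ProbabilityMeasure Ω} (hμs : Tendsto μs L (𝓝 μ)) (hh : LowerSemicontinuous h)
    {c C : ℝ} (hc : ∀ x, c ≤ h x) (hC : ∀ x, h x ≤ C) {b : ℝ}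
    (hb : b < ∫ x, h x ∂(μ : Measure Ω)) :
    ∀ᶠ i in L, b < ∫ x, h x ∂(μs i : Measure Ω) := by
  have h_shift (ν : ProbabilityMeasure Ω) :
      ∫ x, h x - c ∂(ν : Measure Ω) = ∫ x, h x ∂(ν : Measure Ω) - c := by
    have h_integrable : Integrable h ν := .of_bound hh.measurable.aestronglyMeasurable
      (max |c| |C|) (Eventually.of_forall fun x ↦ abs_le_max_abs_abs (hc x) (hC x))
    rw [integral_sub h_integrable (integrable_const c)]
    simp
  have h_liminf := integral_le_liminf_integral_of_lowerSemicontinuous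
    (μs := fun i ↦ (μs i : Measure Ω)) (h := fun x ↦ h x - c)
    (hh.add lowerSemicontinuous_const) (fun x ↦ sub_nonneg.2 (hc x))
    (fun x ↦ sub_le_sub_right (hC x) c) fun G hG ↦ le_liminf_measure_open_of_tendsto hμs hG
  have h_bdd : L.IsBoundedUnder (· ≥ ·) (fun i ↦ ∫ x, h x - c ∂(μs i : Measure Ω)) :=
    isBoundedUnder_of ⟨0, fun i ↦ integral_nonneg fun x ↦ sub_nonneg.2 (hc x)⟩
  filter_upwards [eventually_lt_of_lt_liminf
    ((sub_lt_sub_right hb c).trans_le (h_shift μ ▸ h_liminf)) h_bdd] with i hi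
  linarith [h_shift (μs i)]

namespace ProbabilityMeasure

variable [L.NeBot] {μ : ProbabilityMeasure Ω} {μs : ι → ProbabilityMeasure Ω}

theorem measure_eq_zero_of_tendsto [HasOuterApproxClosed Ω] (hμs : Tendsto μs L (𝓝 μ))
    {G : Set Ω} (hG : IsOpen G) (h0 : ∀ i, (μs i : Measure Ω) G = 0) : (μ : Measure Ω) G = 0 :=
  nonpos_iff_eq_zero.1 <| by
    simpa [h0] using le_liminf_measure_open_of_tendsto hμs hG

theorem map_eq_of_tendsto {Ω' : Type*} [MeasurableSpace Ω'] [TopologicalSpace Ω']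
    [BorelSpace Ω'] [HasOuterApproxClosed Ω'] (hμs : Tendsto μs L (𝓝 μ))
    {F : Ω → Ω'} (hF : Continuous F) {ν : Measure Ω'}
    (hν : ∀ i, (μs i : Measure Ω).map F = ν) : (μ : Measure Ω).map F = ν := by
  obtain ⟨i⟩ := L.nonempty_of_neBot
  have hconst (j : ι) :
      (μs j).map hF.measurable.aemeasurable = (μs i).map hF.measurable.aemeasurable :=
    toMeasure_injective <| by simp only [toMeasure_map, hν]
  have hlim := tendsto_map_of_tendsto_of_continuous μs μ hμs hF
  simp only [hconst] at hlim
  simpa only [toMeasure_map, hν] using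
    congrArg toMeasure (tendsto_nhds_unique hlim tendsto_const_nhds)

end ProbabilityMeasure

end MeasureTheory

theorem stmt_9_general {X Y H : Type*}
    [MetricSpace X]
    [MeasurableSpace X] [BorelSpace X]
    [MetricSpace Y] [SecondCountableTopology Y]
    [MeasurableSpace Y] [BorelSpace Y]
    [NormedAddCommGroup H] [InnerProductSpace ℝ H] [CompleteSpace H]
    [SecondCountableTopology H] [MeasurableSpace H] [BorelSpace H]
    (Z : Set (X × Y)) (hZc : IsClosed Z)
    (g : X × Y → H) (hgm : Measurable g) (M : ℝ) (hM : ∀ z, ‖g z‖ ≤ M)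
    (f : H → ℝ) (f' : H → H)
    (hconv : ConvexOn ℝ Set.univ f)
    (hdiff : ∀ x, HasGradientAt f (f' x) x)
    (m : Measure X)
    (A : Set (ProbabilityMeasure (X × Y)))
    (hA : A = {μ : ProbabilityMeasure (X × Y) |
      (μ : Measure (X × Y)) Zᶜ = 0 ∧ (μ : Measure (X × Y)).map Prod.fst = m})
    (J : ProbabilityMeasure (X × Y) → ℝ)
    (hJ : ∀ μ, J μ = f (∫ z, g z ∂(μ : Measure (X × Y))))
    (μn : ℕ → ProbabilityMeasure (X × Y)) (hμn : ∀ n, μn n ∈ A)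
    (hmin : Tendsto (fun n => J (μn n)) atTop (𝓝 (sInf (J '' A))))
    (μb : ProbabilityMeasure (X × Y)) (φ : ℕ → ℕ) (hφ : StrictMono φ)
    (hnarrow : Tendsto (fun n => μn (φ n)) atTop (𝓝 μb))
    (hlsc : LowerSemicontinuous
      (fun z => ⟪f' (∫ w, g w ∂(μb : Measure (X × Y))), g z⟫))
    (hbdd : ∃ c : ℝ, ∀ z, c ≤ ⟪f' (∫ w, g w ∂(μb : Measure (X × Y))), g z⟫) :
    μb ∈ A ∧ ∀ μ ∈ A, J μb ≤ J μ := by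
  have hμb : μb ∈ A := by
    simp only [hA, mem_ofPred_eq] at hμn ⊢
    exact ⟨ProbabilityMeasure.measure_eq_zero_of_tendsto hnarrow hZc.isOpen_compl
      fun _ ↦ (hμn _).1, ProbabilityMeasure.map_eq_of_tendsto hnarrow continuous_fst
      fun _ ↦ (hμn _).2⟩
  refine ⟨hμb, fun μ hμ ↦ ?_⟩
  set a := ∫ z, g z ∂(μb : Measure (X × Y))
  obtain ⟨c, hc⟩ := hbdd
  have hC : ∀ z, ⟪f' a, g z⟫ ≤ ‖f' a‖ * M := fun z ↦
    (real_inner_le_norm _ _).trans (mul_le_mul_of_nonneg_left (hM z) (norm_nonneg _))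
  have hg_int (ν : ProbabilityMeasure (X × Y)) : Integrable g ν :=
    .of_bound hgm.aestronglyMeasurable M (Eventually.of_forall hM)
  have hJ_ge (ν : ProbabilityMeasure (X × Y)) :
      f a + ∫ z, ⟪f' a, g z⟫ ∂(ν : Measure (X × Y)) - ∫ z, ⟪f' a, g z⟫ ∂(μb : Measure (X × Y))
        ≤ J ν := by
    rw [hJ, integral_inner (hg_int ν), integral_inner (hg_int μb), add_sub_assoc,
      ← inner_sub_right]
    exact hconv.add_inner_gradient_sub_le (mem_univ _) (mem_univ _) (hdiff a)
  have hJ_bdd : BddBelow (J '' A) := by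
    refine ⟨f a + c - ∫ z, ⟪f' a, g z⟫ ∂(μb : Measure (X × Y)), ?_⟩
    rintro _ ⟨ν, -, rfl⟩
    have hc_le : c ≤ ∫ z, ⟪f' a, g z⟫ ∂(ν : Measure (X × Y)) := by
      simpa using integral_mono (integrable_const c) ((hg_int ν).const_inner (f' a)) hc
    linarith [hJ_ge ν]
  have hfa : f a ≤ sInf (J '' A) := by
    refine le_of_forall_sub_le fun ε hε ↦ ge_of_tendsto (hmin.comp hφ.tendsto_atTop) ?_
    filter_upwards [ProbabilityMeasure.eventually_lt_integral_of_tendsto hnarrow hlsc hc hC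
      (sub_lt_self _ hε)] with i hi
    show f a - ε ≤ J (μn (φ i))
    linarith [hJ_ge (μn (φ i))]
  calc J μb = f a := hJ μb
    _ ≤ sInf (J '' A) := hfa
    _ ≤ J μ := csInf_le hJ_bdd ⟨μ, hμ, rfl⟩

/-- Existence of a solution under tightness: every narrow accumulation point of a tight
minimizing sequence of the MFO problem is feasible and optimal. -/
theorem stmt_9 {X Y H : Type*}
    [MetricSpace X] [CompleteSpace X] [SecondCountableTopology X]
    [MeasurableSpace X] [BorelSpace X]
    [MetricSpace Y] [CompleteSpace Y] [SecondCountableTopology Y]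
    [MeasurableSpace Y] [BorelSpace Y]
    [NormedAddCommGroup H] [InnerProductSpace ℝ H] [CompleteSpace H]
    [SecondCountableTopology H] [MeasurableSpace H] [BorelSpace H]
    (Z : Set (X × Y)) (hZc : IsClosed Z)
    (g : X × Y → H) (hgm : Measurable g) (M : ℝ) (hM : ∀ z, ‖g z‖ ≤ M)
    (f : H → ℝ) (f' : H → H)
    (hconv : ConvexOn ℝ Set.univ f)
    (hdiff : ∀ x, HasGradientAt f (f' x) x)
    (L : ℝ≥0) (hlip : LipschitzWith L f')
    (m : Measure X) [IsProbabilityMeasure m]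
    (A : Set (ProbabilityMeasure (X × Y)))
    (hA : A = {μ : ProbabilityMeasure (X × Y) |
      (μ : Measure (X × Y)) Zᶜ = 0 ∧ (μ : Measure (X × Y)).map Prod.fst = m})
    (J : ProbabilityMeasure (X × Y) → ℝ)
    (hJ : ∀ μ, J μ = f (∫ z, g z ∂(μ : Measure (X × Y))))
    (μn : ℕ → ProbabilityMeasure (X × Y)) (hμn : ∀ n, μn n ∈ A)
    (hmin : Tendsto (fun n => J (μn n)) atTop (𝓝 (sInf (J '' A))))
    (htight : ∀ ε : ℝ, 0 < ε → ∃ K : Set (X × Y), K ⊆ Z ∧ IsCompact K ∧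
      ∀ n, 1 - ε ≤ (((μn n : Measure (X × Y)) K).toReal))
    (μb : ProbabilityMeasure (X × Y)) (φ : ℕ → ℕ) (hφ : StrictMono φ)
    (hnarrow : Tendsto (fun n => μn (φ n)) atTop (𝓝 μb))
    (hlsc : LowerSemicontinuous
      (fun z => ⟪f' (∫ w, g w ∂(μb : Measure (X × Y))), g z⟫))
    (hbdd : ∃ c : ℝ, ∀ z, c ≤ ⟪f' (∫ w, g w ∂(μb : Measure (X × Y))), g z⟫) :
    μb ∈ A ∧ ∀ μ ∈ A, J μb ≤ J μ :=
  stmt_9_general Z hZc g hgm M hM f f' hconv hdiff m A hA J hJ μn hμn hmin μb φ hφ hnarrow hlsc hbdd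
end

section
/- Let X be a closed subset of a separable Banach space, Y Polish, Z ⊆ X×Y closed with compact nonempty sections Z_x such that x ⇝ Z_x is upper semi-continuous, and g : Z → H continuous into a separable Hilbert space. Suppose the set-valued map 𝒵(x) = {g(x,y) : y ∈ Z_x} is L_g-Lipschitz (i.e., 𝒵(x₁) ⊆ 𝒵(x₂) + B(0, L_g d_X(x₁,x₂)) for all x₁,x₂). Then the set-valued map S(x,y,x') = {(x', y') ∈ Z : ‖g(x',y') − g(x,y)‖ ≤ L_g d_X(x,x')} from Z × X into Z has nonempty closed values and admits a Borel measurable selection s with ‖g(s(x,y,x')) − g(x,y)‖ ≤ L_g d_X(x,x') for all (x,y,x'). -/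
/-!
The values of `S` are closed because `g` is continuous on the closed set `Z`, and nonempty by
the Lipschitz property of `x ⇝ g(Z_x)`. Compactness of the sections and upper semicontinuity of
`x ⇝ Z_x` let one extract convergent subsequences of points `(x'ₙ, yₙ) ∈ Z` with `x'ₙ`
convergent, so that `{w | S w ∩ C ≠ ∅}` is closed for every closed `C`. Since open sets of a
metric space are countable unions of closed sets, `S` is weakly measurable, and the
Kuratowski–Ryll-Nardzewski theorem gives the selection: it is the pointwise limit of measurable
maps `w ↦ e (n k w)`, `e` a dense sequence, where `S w` meets the ball of radius `2⁻ᵏ` about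
`e (n k w)` and each center is chosen inside the previous ball.
-/

open MeasureTheory Metric Filter Topology

def IsWeaklyMeasurable {W Q : Type*} [MeasurableSpace W] [TopologicalSpace Q]
    (S : W → Set Q) : Prop :=
  ∀ U : Set Q, IsOpen U → MeasurableSet {w | (S w ∩ U).Nonempty}

theorem measurableSet_setOf_apply_self {W : Type*} [MeasurableSpace W] {n : W → ℕ}
    (hn : Measurable n) {p : ℕ → W → Prop} (hp : ∀ j, MeasurableSet {w | p j w}) :
    MeasurableSet {w | p (n w) w} := by
  have : {w | p (n w) w} = ⋃ j, n ⁻¹' {j} ∩ {w | p j w} := by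
    ext w; simp
  exact this ▸ .iUnion fun j => (hn (measurableSet_singleton j)).inter (hp j)

namespace IsWeaklyMeasurable

variable {W Q : Type*} [MeasurableSpace W] [PseudoMetricSpace Q] {S : W → Set Q}

theorem of_isClosed (h : ∀ C, IsClosed C → MeasurableSet {w | (S w ∩ C).Nonempty}) :
    IsWeaklyMeasurable S := by
  intro U hU
  obtain ⟨F, hF, -, rfl, -⟩ := hU.exists_iUnion_isClosed
  simpa only [Set.inter_iUnion, Set.nonempty_iUnion, Set.ofPred_exists] using
    .iUnion fun n => h (F n) (hF n)

theorem inter_ball (hS : IsWeaklyMeasurable S) {n : W → ℕ} (hn : Measurable n) (e : ℕ → Q)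
    (r : ℝ) : IsWeaklyMeasurable fun w => S w ∩ ball (e (n w)) r := by
  intro U hU
  simpa only [Set.inter_assoc] using
    measurableSet_setOf_apply_self hn fun j => hS _ (isOpen_ball.inter hU)

theorem exists_measurable_index (hS : IsWeaklyMeasurable S) (hne : ∀ w, (S w).Nonempty)
    {e : ℕ → Q} (he : DenseRange e) {r : ℝ} (hr : 0 < r) :
    ∃ n : W → ℕ, Measurable n ∧ ∀ w, (S w ∩ ball (e (n w)) r).Nonempty := by
  classical
  have h : ∀ w, ∃ m, (S w ∩ ball (e m) r).Nonempty := fun w => by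
    obtain ⟨q, hq⟩ := hne w
    obtain ⟨m, hm⟩ := he.exists_dist_lt q hr
    exact ⟨m, q, hq, mem_ball.2 hm⟩
  exact ⟨fun w => Nat.find (h w), measurable_find h fun m => hS _ isOpen_ball,
    fun w => Nat.find_spec (h w)⟩

theorem exists_measurable_selection [CompleteSpace Q] [TopologicalSpace.SeparableSpace Q]
    [MeasurableSpace Q] [BorelSpace Q] (hS : IsWeaklyMeasurable S) (hne : ∀ w, (S w).Nonempty)
    (hcl : ∀ w, IsClosed (S w)) : ∃ s : W → Q, Measurable s ∧ ∀ w, s w ∈ S w := by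
  rcases isEmpty_or_nonempty W with _ | ⟨⟨w₀⟩⟩
  · exact ⟨isEmptyElim, Subsingleton.measurable, isEmptyElim⟩
  have : Nonempty Q := (hne w₀).to_subtype.map Subtype.val
  obtain ⟨e, he⟩ := TopologicalSpace.exists_dense_seq Q
  have step : ∀ (k : ℕ) (n : W → ℕ), Measurable n →
      (∀ w, (S w ∩ ball (e (n w)) ((1 / 2) ^ k)).Nonempty) → ∃ n' : W → ℕ, Measurable n' ∧
      ∀ w, (S w ∩ ball (e (n w)) ((1 / 2) ^ k) ∩ ball (e (n' w)) ((1 / 2) ^ (k + 1))).Nonempty :=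
    fun k n hn h => (hS.inter_ball hn e _).exists_measurable_index h he (by positivity)
  choose! next hnext_meas hnext using step
  obtain ⟨n₀, hn₀_meas, hn₀⟩ := hS.exists_measurable_index hne he (pow_pos one_half_pos 0)
  let n : ℕ → W → ℕ := fun k => Nat.rec n₀ next k
  have hn : ∀ k, Measurable (n k) ∧ ∀ w, (S w ∩ ball (e (n k w)) ((1 / 2) ^ k)).Nonempty := by
    intro k
    induction k with
    | zero => exact ⟨hn₀_meas, hn₀⟩
    | succ k ih =>
      exact ⟨hnext_meas k _ ih.1 ih.2,
        fun w => (hnext k _ ih.1 ih.2 w).mono fun q hq => ⟨hq.1.1, hq.2⟩⟩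
  have hdist : ∀ w k, dist (e (n k w)) (e (n (k + 1) w)) ≤ 2 * (1 / 2) ^ k := fun w k => by
    obtain ⟨q, ⟨-, hq⟩, hq'⟩ := hnext k _ (hn k).1 (hn k).2 w
    have : (0 : ℝ) ≤ (1 / 2) ^ k := by positivity
    calc dist (e (n k w)) (e (n (k + 1) w)) ≤ (1 / 2) ^ k + (1 / 2) ^ (k + 1) :=
          (dist_lt_add_of_nonempty_ball_inter_ball ⟨q, hq, hq'⟩).le
      _ ≤ 2 * (1 / 2) ^ k := by rw [pow_succ]; linarith
  choose s hs using fun w => cauchySeq_tendsto_of_complete <|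
    cauchySeq_of_le_geometric (1 / 2) 2 (by norm_num) (hdist w)
  refine ⟨s, measurable_of_tendsto_metrizable (fun k => ?_) (tendsto_pi_nhds.2 hs), fun w => ?_⟩
  · exact measurable_from_top.comp (hn k).1
  choose q hqS hq using fun k => (hn k).2 w
  refine (hcl w).mem_of_tendsto ((hs w).congr_dist ?_) (.of_forall hqS)
  exact squeeze_zero (fun k => dist_nonneg)
    (fun k => (dist_comm _ _).trans_le (mem_ball.1 (hq k)).le)
    (tendsto_pow_atTop_nhds_zero_of_lt_one (by norm_num) (by norm_num))

end IsWeaklyMeasurable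

section LiftSet

variable {E Y H : Type*} [MetricSpace E] [TopologicalSpace Y] [SeminormedAddCommGroup H]

/-- `liftSet Z g L ((x, y), x')` is the set `S(x, y, x')`. -/
def liftSet (Z : Set (E × Y)) (g : E × Y → H) (L : ℝ) (w : (E × Y) × E) : Set (E × Y) :=
  {q | q ∈ Z ∧ q.1 = w.2 ∧ ‖g q - g w.1‖ ≤ L * dist w.1.1 w.2}

variable {Z : Set (E × Y)} {g : E × Y → H}

theorem isClosed_graph_liftSet (hZ : IsClosed Z) (hg : ContinuousOn g Z) (L : ℝ) :
    IsClosed {p : ((E × Y) × E) × (E × Y) | p.1.1 ∈ Z ∧ p.2 ∈ liftSet Z g L p.1} := by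
  have hs : IsClosed {p : ((E × Y) × E) × (E × Y) | p.1.1 ∈ Z ∧ p.2 ∈ Z ∧ p.2.1 = p.1.2} :=
    (hZ.preimage (by fun_prop)).inter <| (hZ.preimage continuous_snd).inter <|
      isClosed_eq (by fun_prop) (by fun_prop)
  have hf : ContinuousOn (fun p : ((E × Y) × E) × (E × Y) =>
      ‖g p.2 - g p.1.1‖ - L * dist p.1.1.1 p.1.2) {p | p.1.1 ∈ Z ∧ p.2 ∈ Z ∧ p.2.1 = p.1.2} :=
    (((hg.comp continuous_snd.continuousOn fun _ hp => hp.2.1).sub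
      (hg.comp (by fun_prop : Continuous fun p : ((E × Y) × E) × (E × Y) => p.1.1).continuousOn
        fun _ hp => hp.1)).norm).sub (by fun_prop)
  convert hf.preimage_isClosed_of_isClosed hs (isClosed_Iic (a := 0)) using 1
  ext p
  simp only [liftSet, Set.mem_ofPred_eq, Set.mem_inter_iff, Set.mem_preimage, Set.mem_Iic,
    sub_nonpos]
  tauto

theorem isClosed_liftSet (hZ : IsClosed Z) (hg : ContinuousOn g Z) (L : ℝ) {w : (E × Y) × E}
    (hw : w.1 ∈ Z) : IsClosed (liftSet Z g L w) := by
  convert (isClosed_graph_liftSet hZ hg L).preimage (Continuous.prodMk_right w) using 1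
  ext q; simp [hw]

theorem exists_subseq_tendsto_of_isCompact_section [FirstCountableTopology Y] {X : Set E}
    {x : E} (hK : IsCompact {y | (x, y) ∈ Z})
    (husc : ∀ U : Set Y, IsOpen U → {y | (x, y) ∈ Z} ⊆ U →
      ∃ η > (0 : ℝ), ∀ x' ∈ X, dist x x' < η → {y | (x', y) ∈ Z} ⊆ U)
    {u : ℕ → E} (hu : Tendsto u atTop (𝓝 x)) (huX : ∀ n, u n ∈ X) {v : ℕ → Y}
    (hv : ∀ n, (u n, v n) ∈ Z) :
    ∃ y, (x, y) ∈ Z ∧ ∃ ψ : ℕ → ℕ, StrictMono ψ ∧ Tendsto (v ∘ ψ) atTop (𝓝 y) := by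
  have hv_nhdsSet : Tendsto v atTop (𝓝ˢ {y | (x, y) ∈ Z}) :=
    (hasBasis_nhdsSet _).tendsto_right_iff.2 fun U ⟨hU, hKU⟩ => by
      obtain ⟨η, hη, hsub⟩ := husc U hU hKU
      filter_upwards [hu (ball_mem_nhds x hη)] with n hn
      exact hsub _ (huX n) (mem_ball'.1 hn) (hv n)
  obtain ⟨y, hy, hcluster⟩ : ∃ y, (x, y) ∈ Z ∧ MapClusterPt y atTop v := by
    by_contra! h
    have hdisj := hK.disjoint_nhdsSet_left.2 fun y hy => by
      simpa [MapClusterPt, clusterPt_iff_not_disjoint] using h y hy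
    exact (map_neBot (m := v) (f := atTop)).ne (hdisj.eq_bot_of_ge hv_nhdsSet)
  exact ⟨y, hy, hcluster.tendsto_subseq⟩

theorem isClosed_setOf_liftSet_inter_nonempty [FirstCountableTopology Y] {X : Set E}
    (hX : IsClosed X) (hZ : IsClosed Z) (hsec : ∀ x ∈ X, IsCompact {y | (x, y) ∈ Z})
    (husc : ∀ x ∈ X, ∀ U : Set Y, IsOpen U → {y | (x, y) ∈ Z} ⊆ U →
      ∃ η > (0 : ℝ), ∀ x' ∈ X, dist x x' < η → {y | (x', y) ∈ Z} ⊆ U)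
    (hg : ContinuousOn g Z) (L : ℝ) {C : Set (E × Y)} (hC : IsClosed C) :
    IsClosed {w : (E × Y) × E | (w.1 ∈ Z ∧ w.2 ∈ X) ∧ (liftSet Z g L w ∩ C).Nonempty} := by
  refine IsSeqClosed.isClosed fun {u w} hu hlim => ?_
  have hwD : w.1 ∈ Z ∧ w.2 ∈ X := ((hZ.preimage continuous_fst).inter
    (hX.preimage continuous_snd)).isSeqClosed (fun n => (hu n).1) hlim
  choose q hqS hqC using fun n => (hu n).2
  have hu₂ : Tendsto (fun n => (u n).2) atTop (𝓝 w.2) := (continuous_snd.tendsto w).comp hlim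
  obtain ⟨y, hy, ψ, hψ, hyψ⟩ := exists_subseq_tendsto_of_isCompact_section (hsec _ hwD.2)
    (husc _ hwD.2) hu₂ (fun n => (hu n).1.2) (v := fun n => (q n).2)
    fun n => (hqS n).2.1 ▸ (hqS n).1
  have hqψ : Tendsto (q ∘ ψ) atTop (𝓝 (w.2, y)) := by
    refine Prod.tendsto_iff _ _ |>.2 ⟨?_, hyψ⟩
    simpa only [Function.comp_def, (hqS _).2.1] using hu₂.comp hψ.tendsto_atTop
  refine ⟨hwD, (w.2, y), ?_, hC.mem_of_tendsto hqψ (.of_forall fun n => hqC _)⟩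
  exact ((isClosed_graph_liftSet hZ hg L).mem_of_tendsto
    ((hlim.comp hψ.tendsto_atTop).prodMk_nhds hqψ)
    (.of_forall fun n => ⟨(hu _).1.1, hqS _⟩)).2

end LiftSet

theorem stmt_11_general {E Y H : Type*}
    [NormedAddCommGroup E] [CompleteSpace E]
    [SecondCountableTopology E] [MeasurableSpace E] [BorelSpace E]
    [MetricSpace Y] [CompleteSpace Y] [SecondCountableTopology Y]
    [MeasurableSpace Y] [BorelSpace Y]
    [NormedAddCommGroup H]
    (X : Set E) (hX : IsClosed X)
    (Z : Set (E × Y)) (hZc : IsClosed Z) (hZX : ∀ z ∈ Z, z.1 ∈ X)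
    (hsec : ∀ x ∈ X, IsCompact {y | (x, y) ∈ Z} ∧ {y | (x, y) ∈ Z}.Nonempty)
    (husc : ∀ x ∈ X, ∀ U : Set Y, IsOpen U → {y | (x, y) ∈ Z} ⊆ U →
      ∃ η > (0 : ℝ), ∀ x' ∈ X, dist x x' < η → {y | (x', y) ∈ Z} ⊆ U)
    (g : E × Y → H) (hg : ContinuousOn g Z)
    (Lg : ℝ)
    (hlip : ∀ x₁ ∈ X, ∀ x₂ ∈ X, ∀ y₁, (x₁, y₁) ∈ Z →
      ∃ y₂, (x₂, y₂) ∈ Z ∧ ‖g (x₂, y₂) - g (x₁, y₁)‖ ≤ Lg * dist x₁ x₂) :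
    (∀ x y x', (x, y) ∈ Z → x' ∈ X →
      ({q : E × Y | q ∈ Z ∧ q.1 = x' ∧ ‖g q - g (x, y)‖ ≤ Lg * dist x x'}).Nonempty ∧
      IsClosed {q : E × Y | q ∈ Z ∧ q.1 = x' ∧ ‖g q - g (x, y)‖ ≤ Lg * dist x x'}) ∧
    ∃ s : (E × Y) × E → E × Y, Measurable s ∧
      ∀ x y x', (x, y) ∈ Z → x' ∈ X →
        s ((x, y), x') ∈ Z ∧ (s ((x, y), x')).1 = x' ∧
        ‖g (s ((x, y), x')) - g (x, y)‖ ≤ Lg * dist x x' := by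
  classical
  let D : Set ((E × Y) × E) := {w | w.1 ∈ Z ∧ w.2 ∈ X}
  have hne : ∀ w ∈ D, (liftSet Z g Lg w).Nonempty := fun w ⟨hw₁, hw₂⟩ => by
    obtain ⟨y, hy, hdist⟩ := hlip _ (hZX _ hw₁) _ hw₂ _ hw₁
    exact ⟨(w.2, y), hy, rfl, hdist⟩
  refine ⟨fun x y x' hxy hx' => ⟨hne ((x, y), x') ⟨hxy, hx'⟩,
    isClosed_liftSet hZc hg Lg (w := ((x, y), x')) hxy⟩, ?_⟩
  have hS : IsWeaklyMeasurable fun w : D => liftSet Z g Lg w :=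
    .of_isClosed fun C hC => by
      convert measurable_subtype_coe (isClosed_setOf_liftSet_inter_nonempty hX hZc
        (fun x hx => (hsec x hx).1) husc hg Lg hC).measurableSet using 1
      ext ⟨w, hw⟩
      simp [hw.1, hw.2]
  obtain ⟨s, hs, hsS⟩ := hS.exists_measurable_selection (fun w => hne w w.2)
    fun w => isClosed_liftSet hZc hg Lg w.2.1
  have hD : MeasurableSet D :=
    ((hZc.preimage continuous_fst).inter (hX.preimage continuous_snd)).measurableSet
  refine ⟨fun w => if h : w ∈ D then s ⟨w, h⟩ else w.1,
    hs.dite (measurable_fst.comp measurable_subtype_coe) hD, fun x y x' hxy hx' => ?_⟩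
  have hw : ((x, y), x') ∈ D := ⟨hxy, hx'⟩
  simp only [dif_pos hw]
  exact hsS ⟨_, hw⟩

/-- Existence of a Borel measurable selection `s` of the set-valued map
`S(x,y,x') = {(x',y') ∈ Z : ‖g(x',y') − g(x,y)‖ ≤ L_g d(x,x')}`, which moreover has
nonempty closed values. -/
theorem stmt_11 {E Y H : Type*}
    [NormedAddCommGroup E] [NormedSpace ℝ E] [CompleteSpace E]
    [SecondCountableTopology E] [MeasurableSpace E] [BorelSpace E]
    [MetricSpace Y] [CompleteSpace Y] [SecondCountableTopology Y]
    [MeasurableSpace Y] [BorelSpace Y]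
    [NormedAddCommGroup H] [InnerProductSpace ℝ H] [CompleteSpace H]
    [SecondCountableTopology H]
    (X : Set E) (hX : IsClosed X)
    (Z : Set (E × Y)) (hZc : IsClosed Z) (hZX : ∀ z ∈ Z, z.1 ∈ X)
    (hsec : ∀ x ∈ X, IsCompact {y | (x, y) ∈ Z} ∧ {y | (x, y) ∈ Z}.Nonempty)
    (husc : ∀ x ∈ X, ∀ U : Set Y, IsOpen U → {y | (x, y) ∈ Z} ⊆ U →
      ∃ η > (0 : ℝ), ∀ x' ∈ X, dist x x' < η → {y | (x', y) ∈ Z} ⊆ U)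
    (g : E × Y → H) (hg : ContinuousOn g Z)
    (Lg : ℝ) (hLg : 0 ≤ Lg)
    (hlip : ∀ x₁ ∈ X, ∀ x₂ ∈ X, ∀ y₁, (x₁, y₁) ∈ Z →
      ∃ y₂, (x₂, y₂) ∈ Z ∧ ‖g (x₂, y₂) - g (x₁, y₁)‖ ≤ Lg * dist x₁ x₂) :
    (∀ x y x', (x, y) ∈ Z → x' ∈ X →
      ({q : E × Y | q ∈ Z ∧ q.1 = x' ∧ ‖g q - g (x, y)‖ ≤ Lg * dist x x'}).Nonempty ∧
      IsClosed {q : E × Y | q ∈ Z ∧ q.1 = x' ∧ ‖g q - g (x, y)‖ ≤ Lg * dist x x'}) ∧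
    ∃ s : (E × Y) × E → E × Y, Measurable s ∧
      ∀ x y x', (x, y) ∈ Z → x' ∈ X →
        s ((x, y), x') ∈ Z ∧ (s ((x, y), x')).1 = x' ∧
        ‖g (s ((x, y), x')) - g (x, y)‖ ≤ Lg * dist x x' :=
  stmt_11_general X hX Z hZc hZX hsec husc g hg Lg hlip
end

section
/- Under the bridging-method assumptions (g bounded continuous with ‖g‖ ≤ M, f convex with L-Lipschitz gradient, 𝒵 L_g-Lipschitz, C an upper bound for ‖∇f(∫ g dμ)‖ over all μ ∈ 𝒫(Z)): if ν is a coupling in 𝒫(Z × X) with π₁₂#ν = μ̄₀ and π₃#ν = m₁, and μ₁ = s#ν where s is the measurable selection of S, then μ₁ has first marginal m₁ and f(∫_Z g dμ₁) − f(∫_Z g dμ̄₀) ≤ L_g (C + L M) ∫_{Z×X} d_X(x,x') dν(x,y,x'). -/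
open MeasureTheory
open scoped RealInnerProductSpace NNReal

/-!
Push the coupling `ν` forward along the selection `s`. Since `s` moves `(x, y)` to a point of `Z`
with first coordinate `x'`, the image `μ₁` is supported on `Z` and has first marginal `m₁`, and
`b = ∫ g dμ₁`, `a = ∫ g dμ̄₀` satisfy `‖b - a‖ ≤ L_g ∫ d_X(x, x') dν`. First-order convexity at `b`
then gives `f b - f a ≤ ‖∇f b‖ ‖b - a‖ ≤ C L_g ∫ d_X dν ≤ L_g (C + L M) ∫ d_X dν`.
-/

section Convexity

variable {E : Type*} [NormedAddCommGroup E] [NormedSpace ℝ E]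

theorem ConvexOn.sub_le_fderiv_apply_sub {s : Set E} {f : E → ℝ} {f' : E →L[ℝ] ℝ} {a b : E}
    (hf : ConvexOn ℝ s f) (ha : a ∈ s) (hb : b ∈ s) (hfb : HasFDerivAt f f' b) :
    f b - f a ≤ f' (b - a) := by
  set ℓ : ℝ →ᵃ[ℝ] E := AffineMap.lineMap a b
  have hℓ : HasDerivAt (f ∘ ℓ) (f' (b - a)) 1 := by
    refine HasFDerivAt.comp_hasDerivAt (1 : ℝ) ?_ AffineMap.hasDerivAt_lineMap
    rwa [AffineMap.lineMap_apply_one]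
  have hslope := (hf.comp_affineMap ℓ).slope_le_of_hasDerivAt
    (by simpa [ℓ] using ha) (by simpa [ℓ] using hb) one_pos hℓ
  simpa [slope_def_field, ℓ] using hslope

theorem ConvexOn.sub_le_norm_gradient_mul_norm_sub {F : Type*} [NormedAddCommGroup F]
    [InnerProductSpace ℝ F] [CompleteSpace F] {f : F → ℝ} {f'b a b : F}
    (hf : ConvexOn ℝ Set.univ f) (hfb : HasGradientAt f f'b b) :
    f b - f a ≤ ‖f'b‖ * ‖b - a‖ :=
  calc f b - f a ≤ ⟪f'b, b - a⟫ := by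
        simpa only [InnerProductSpace.toDual_apply_apply] using
          hf.sub_le_fderiv_apply_sub (Set.mem_univ a) (Set.mem_univ b) hfb.hasFDerivAt
    _ ≤ ‖f'b‖ * ‖b - a‖ := real_inner_le_norm _ _

end Convexity

namespace MeasureTheory

variable {Ω α β : Type*} [MeasurableSpace Ω] [MeasurableSpace α] [MeasurableSpace β]
  {ν : Measure Ω}

theorem Measure.map_compl_eq_zero_of_ae_mem {φ : Ω → α} (hφ : Measurable φ) {Z : Set α}
    (hZ : MeasurableSet Z) (h : ∀ᵐ ω ∂ν, φ ω ∈ Z) : ν.map φ Zᶜ = 0 :=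
  ae_iff.1 ((ae_map_iff hφ.aemeasurable hZ).2 h)

theorem Measure.map_fst_map_eq_map_of_ae_eq {s : Ω → α × β} {t : Ω → α} (hs : Measurable s)
    (h : ∀ᵐ ω ∂ν, (s ω).1 = t ω) : (ν.map s).map Prod.fst = ν.map t := by
  rw [Measure.map_map measurable_fst hs]
  exact Measure.map_congr h

theorem norm_integral_map_sub_integral_map_le {E : Type*} [NormedAddCommGroup E]
    [NormedSpace ℝ E] [IsFiniteMeasure ν] {φ ψ : Ω → α} (hφ : Measurable φ) (hψ : Measurable ψ)
    {g : α → E} (hg : StronglyMeasurable g) {M : ℝ} (hM : ∀ z, ‖g z‖ ≤ M) {d : Ω → ℝ}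
    (hd : Integrable d ν) (h : ∀ᵐ ω ∂ν, ‖g (φ ω) - g (ψ ω)‖ ≤ d ω) :
    ‖∫ z, g z ∂ν.map φ - ∫ z, g z ∂ν.map ψ‖ ≤ ∫ ω, d ω ∂ν := by
  have integrable_comp {χ : Ω → α} (hχ : Measurable χ) : Integrable (fun ω ↦ g (χ ω)) ν :=
    .of_bound (hg.comp_measurable hχ).aestronglyMeasurable M (.of_forall fun _ ↦ hM _)
  rw [integral_map hφ.aemeasurable hg.aestronglyMeasurable,
    integral_map hψ.aemeasurable hg.aestronglyMeasurable,
    ← integral_sub (integrable_comp hφ) (integrable_comp hψ)]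
  exact norm_integral_le_of_norm_le hd h

end MeasureTheory

theorem stmt_12_general {X Y H : Type*}
    [MetricSpace X] [SecondCountableTopology X]
    [MeasurableSpace X] [BorelSpace X]
    [MetricSpace Y] [SecondCountableTopology Y]
    [MeasurableSpace Y] [BorelSpace Y]
    [NormedAddCommGroup H] [InnerProductSpace ℝ H] [CompleteSpace H]
    (Z : Set (X × Y)) (hZ : IsClosed Z)
    (g : X × Y → H) (hgc : Continuous g) (M : ℝ) (hM : ∀ z, ‖g z‖ ≤ M)
    (f : H → ℝ) (f' : H → H)
    (hconv : ConvexOn ℝ Set.univ f)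
    (hdiff : ∀ x, HasGradientAt f (f' x) x)
    (L : ℝ≥0)
    (Lg C : ℝ) (hLg : 0 ≤ Lg)
    (hC : ∀ μ : Measure (X × Y), IsProbabilityMeasure μ → μ Zᶜ = 0 →
      ‖f' (∫ z, g z ∂μ)‖ ≤ C)
    (μ0 : Measure (X × Y)) [IsProbabilityMeasure μ0] (hμ0Z : μ0 Zᶜ = 0)
    (m1 : Measure X)
    (ν : Measure ((X × Y) × X)) [IsProbabilityMeasure ν]
    (hν1 : ν.map Prod.fst = μ0) (hν2 : ν.map Prod.snd = m1)
    (hνint : Integrable (fun p : (X × Y) × X => dist p.1.1 p.2) ν)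
    (s : (X × Y) × X → X × Y) (hs : Measurable s)
    (hsel : ∀ p : (X × Y) × X, p.1 ∈ Z →
      s p ∈ Z ∧ (s p).1 = p.2 ∧ ‖g (s p) - g p.1‖ ≤ Lg * dist p.1.1 p.2)
    (μ1 : Measure (X × Y)) (hμ1 : μ1 = ν.map s) :
    μ1 Zᶜ = 0 ∧ μ1.map Prod.fst = m1 ∧
    f (∫ z, g z ∂μ1) - f (∫ z, g z ∂μ0)
      ≤ Lg * (C + (L : ℝ) * M) * ∫ p : (X × Y) × X, dist p.1.1 p.2 ∂ν := by
  subst hμ1 hν1 hν2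
  have hsupp : ∀ᵐ p ∂ν, p.1 ∈ Z := ae_of_ae_map measurable_fst.aemeasurable (ae_iff.2 hμ0Z)
  have hμ1Z : ν.map s Zᶜ = 0 :=
    Measure.map_compl_eq_zero_of_ae_mem hs hZ.measurableSet (hsupp.mono fun p hp ↦ (hsel p hp).1)
  refine ⟨hμ1Z, Measure.map_fst_map_eq_map_of_ae_eq hs (hsupp.mono fun p hp ↦ (hsel p hp).2.1), ?_⟩
  set I := ∫ p : (X × Y) × X, dist p.1.1 p.2 ∂ν
  have hdist : ‖∫ z, g z ∂ν.map s - ∫ z, g z ∂ν.map Prod.fst‖ ≤ Lg * I := by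
    rw [← integral_const_mul]
    exact norm_integral_map_sub_integral_map_le hs measurable_fst hgc.stronglyMeasurable hM
      (hνint.const_mul Lg) (hsupp.mono fun p hp ↦ (hsel p hp).2.2)
  have hgrad := hC _ (Measure.isProbabilityMeasure_map hs.aemeasurable) hμ1Z
  have hM0 : 0 ≤ M := (norm_nonneg _).trans (hM (nonempty_of_isProbabilityMeasure ν).some.1)
  have hLMI : 0 ≤ Lg * ((L : ℝ) * M) * I :=
    mul_nonneg (mul_nonneg hLg (mul_nonneg L.coe_nonneg hM0)) (integral_nonneg fun _ ↦ dist_nonneg)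
  calc _ ≤ ‖f' (∫ z, g z ∂ν.map s)‖ * ‖∫ z, g z ∂ν.map s - ∫ z, g z ∂ν.map Prod.fst‖ :=
        hconv.sub_le_norm_gradient_mul_norm_sub (hdiff _)
    _ ≤ C * (Lg * I) := mul_le_mul hgrad hdist (norm_nonneg _) ((norm_nonneg _).trans hgrad)
    _ ≤ C * (Lg * I) + Lg * ((L : ℝ) * M) * I := le_add_of_nonneg_right hLMI
    _ = Lg * (C + (L : ℝ) * M) * I := by ring

/-- Bridging estimate: pushing a coupling `ν ∈ Π(μ̄₀, m₁)` forward by the measurable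
selection `s` of `S` produces `μ₁ ∈ 𝒫_{m₁}(Z)` with
`f(∫ g dμ₁) − f(∫ g dμ̄₀) ≤ L_g (C + L M) ∫ d_X(x,x') dν`. -/
theorem stmt_12 {X Y H : Type*}
    [MetricSpace X] [CompleteSpace X] [SecondCountableTopology X]
    [MeasurableSpace X] [BorelSpace X]
    [MetricSpace Y] [CompleteSpace Y] [SecondCountableTopology Y]
    [MeasurableSpace Y] [BorelSpace Y]
    [NormedAddCommGroup H] [InnerProductSpace ℝ H] [CompleteSpace H]
    [SecondCountableTopology H] [MeasurableSpace H] [BorelSpace H]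
    (Z : Set (X × Y)) (hZ : IsClosed Z)
    (g : X × Y → H) (hgc : Continuous g) (M : ℝ) (hM : ∀ z, ‖g z‖ ≤ M)
    (f : H → ℝ) (f' : H → H)
    (hconv : ConvexOn ℝ Set.univ f)
    (hdiff : ∀ x, HasGradientAt f (f' x) x)
    (L : ℝ≥0) (hlipf : LipschitzWith L f')
    (Lg C : ℝ) (hLg : 0 ≤ Lg)
    (hC : ∀ μ : Measure (X × Y), IsProbabilityMeasure μ → μ Zᶜ = 0 →
      ‖f' (∫ z, g z ∂μ)‖ ≤ C)
    (μ0 : Measure (X × Y)) [IsProbabilityMeasure μ0] (hμ0Z : μ0 Zᶜ = 0)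
    (m1 : Measure X) [IsProbabilityMeasure m1]
    (ν : Measure ((X × Y) × X)) [IsProbabilityMeasure ν]
    (hν1 : ν.map Prod.fst = μ0) (hν2 : ν.map Prod.snd = m1)
    (hνint : Integrable (fun p : (X × Y) × X => dist p.1.1 p.2) ν)
    (s : (X × Y) × X → X × Y) (hs : Measurable s)
    (hsel : ∀ p : (X × Y) × X, p.1 ∈ Z →
      s p ∈ Z ∧ (s p).1 = p.2 ∧ ‖g (s p) - g p.1‖ ≤ Lg * dist p.1.1 p.2)
    (μ1 : Measure (X × Y)) (hμ1 : μ1 = ν.map s) :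
    μ1 Zᶜ = 0 ∧ μ1.map Prod.fst = m1 ∧
    f (∫ z, g z ∂μ1) - f (∫ z, g z ∂μ0)
      ≤ Lg * (C + (L : ℝ) * M) * ∫ p : (X × Y) × X, dist p.1.1 p.2 ∂ν :=
  stmt_12_general Z hZ g hgc M hM f f' hconv hdiff L Lg C hLg hC μ0 hμ0Z m1 ν hν1 hν2 hνint s hs
    hsel μ1 hμ1
end

section
/- If μ̄₀ is an ε₀-minimizer of the MFO problem with marginal m₀, and μ₁ is produced by the bridging method (transport μ̄₀ along an optimal plan between m₀ and m₁ and apply the measurable selection s), then μ₁ is an η-minimizer of the MFO problem with marginal m₁, where η = ε₀ + 2 L_g (C + L M) d₁(m₀, m₁). -/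
/-!
Pushing the plan `ν` through the selection `s` moves each point of `μ̄₀` to its partner under `ν`
and moves `g` by at most `L_g` times the transport distance, so the barycenters of `μ̄₀` and `μ₁`
differ by at most `L_g d₁`. For convex differentiable `f`, `f b ≤ f a + ‖∇f b‖ ‖b - a‖`, and
`‖∇f‖ ≤ C` at feasible barycenters, so the cost rises by at most `C L_g d₁`. Running the same
construction backwards, after gluing an arbitrary feasible measure for `m₁` to the reversed plan
by disintegration, gives `V m₀ ≤ V m₁ + C L_g d₁`. The two estimates add up to a bound with
`2 C L_g d₁ ≤ 2 L_g (C + L M) d₁`.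
-/

open MeasureTheory Set
open scoped RealInnerProductSpace NNReal ProbabilityTheory

section Gradient

variable {H : Type*} [NormedAddCommGroup H] [InnerProductSpace ℝ H] [CompleteSpace H]
  {f : H → ℝ} {g y : H}

theorem ConvexOn.add_inner_le_of_hasGradientAt (hf : ConvexOn ℝ univ f)
    (hg : HasGradientAt f g y) (x : H) : f y + ⟪g, x - y⟫ ≤ f x := by
  have hline : ConvexOn ℝ univ (fun t : ℝ => f (t • (x - y) + y)) := by
    simpa [Function.comp_def, AffineMap.lineMap_apply] using
      hf.comp_affineMap (AffineMap.lineMap y x : ℝ →ᵃ[ℝ] H)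
  have hderiv : HasDerivAt (fun t : ℝ => f (t • (x - y) + y)) ⟪g, x - y⟫ 0 := by
    have hf' : HasFDerivAt f (InnerProductSpace.toDual ℝ H g) ((0 : ℝ) • (x - y) + y) := by
      simpa using hg.hasFDerivAt
    simpa [Function.comp_def, InnerProductSpace.toDual_apply_apply] using
      hf'.comp_hasDerivAt (0 : ℝ) (((hasDerivAt_id _).smul_const (x - y)).add_const y)
  have hslope := hline.le_slope_of_hasDerivAt (mem_univ 0) (mem_univ 1) zero_lt_one hderiv
  simp only [slope_def_field, one_smul, zero_smul, sub_add_cancel, zero_add, sub_zero,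
    div_one] at hslope
  linarith

theorem ConvexOn.le_add_norm_mul_norm_sub_of_hasGradientAt (hf : ConvexOn ℝ univ f)
    (hg : HasGradientAt f g y) (x : H) : f y ≤ f x + ‖g‖ * ‖y - x‖ := by
  have hinner : -⟪g, x - y⟫ ≤ ‖g‖ * ‖y - x‖ := by
    rw [← inner_neg_right, neg_sub]
    exact real_inner_le_norm g (y - x)
  linarith [hf.add_inner_le_of_hasGradientAt hg x]

end Gradient

theorem sInf_image_le_sInf_image_add {α : Type*} {c : α → ℝ} {A B : Set α} {δ : ℝ}
    (hA : BddBelow (c '' A)) (hB : B.Nonempty) (h : ∀ b ∈ B, ∃ a ∈ A, c a ≤ c b + δ) :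
    sInf (c '' A) ≤ sInf (c '' B) + δ := by
  rw [← sub_le_iff_le_add]
  refine le_csInf (hB.image c) ?_
  rintro _ ⟨b, hb, rfl⟩
  obtain ⟨a, ha, hab⟩ := h b hb
  linarith [csInf_le hA ⟨a, ha, rfl⟩]

theorem ae_fst_mem_and_snd_mem {α β : Type*} [MeasurableSpace α] [MeasurableSpace β]
    {ρ : Measure (α × β)} {A : Set α} {B : Set β} (hA : ρ.map Prod.fst Aᶜ = 0)
    (hB : ρ.map Prod.snd Bᶜ = 0) : ∀ᵐ p ∂ρ, p.1 ∈ A ∧ p.2 ∈ B :=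
  (ae_of_ae_map measurable_fst.aemeasurable (mem_ae_iff.2 hA)).and
    (ae_of_ae_map measurable_snd.aemeasurable (mem_ae_iff.2 hB))

theorem norm_integral_map_sub_le {Ω β G : Type*} [MeasurableSpace Ω] [MeasurableSpace β]
    [NormedAddCommGroup G] [NormedSpace ℝ G] {ρ : Measure Ω} [IsFiniteMeasure ρ]
    {g : β → G} (hg : StronglyMeasurable g) {M : ℝ} (hM : ∀ z, ‖g z‖ ≤ M)
    {s t : Ω → β} (hs : Measurable s) (ht : Measurable t) {c : Ω → ℝ} (hc : Integrable c ρ)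
    (hst : ∀ᵐ ω ∂ρ, ‖g (s ω) - g (t ω)‖ ≤ c ω) :
    ‖∫ z, g z ∂(ρ.map s) - ∫ z, g z ∂(ρ.map t)‖ ≤ ∫ ω, c ω ∂ρ := by
  have hint : ∀ {u : Ω → β}, Measurable u → Integrable (fun ω => g (u ω)) ρ := fun hu =>
    .of_bound (hg.comp_measurable hu).aestronglyMeasurable M (.of_forall fun _ => hM _)
  rw [integral_map hs.aemeasurable hg.aestronglyMeasurable,
    integral_map ht.aemeasurable hg.aestronglyMeasurable, ← integral_sub (hint hs) (hint ht)]
  exact norm_integral_le_of_norm_le hc hst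

theorem exists_map_fst_eq_and_map_prodMap_eq {α Ω Ω' : Type*} [MeasurableSpace α]
    [MeasurableSpace Ω] [MeasurableSpace Ω'] [StandardBorelSpace Ω'] [Nonempty Ω']
    {μ : Measure α} [IsProbabilityMeasure μ] {γ : Measure (Ω × Ω')} [IsFiniteMeasure γ]
    {p : α → Ω} (hp : Measurable p) (h : μ.map p = γ.map Prod.fst) :
    ∃ ρ : Measure (α × Ω'), IsProbabilityMeasure ρ ∧ ρ.map Prod.fst = μ ∧
      ρ.map (Prod.map p id) = γ := by
  refine ⟨μ ⊗ₘ γ.condKernel.comap p hp, inferInstance, Measure.fst_compProd _ _, ?_⟩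
  have hpid : Measurable (Prod.map p id : α × Ω' → Ω × Ω') := hp.prodMap measurable_id
  ext t ht
  rw [Measure.map_apply hpid ht, Measure.compProd_apply (hpid ht)]
  calc ∫⁻ a, γ.condKernel.comap p hp a (Prod.mk a ⁻¹' (Prod.map p id ⁻¹' t)) ∂μ
      = ∫⁻ a, γ.condKernel (p a) (Prod.mk (p a) ⁻¹' t) ∂μ := rfl
    _ = ∫⁻ x, γ.condKernel x (Prod.mk x ⁻¹' t) ∂(μ.map p) :=
        (lintegral_map (ProbabilityTheory.Kernel.measurable_kernel_prodMk_left ht) hp).symm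
    _ = (γ.fst ⊗ₘ γ.condKernel) t := by rw [h, Measure.compProd_apply ht]; rfl
    _ = γ t := by rw [γ.disintegrate γ.condKernel]

namespace MFO

variable {E Y H : Type*} [MeasurableSpace E] [MeasurableSpace Y]
  [NormedAddCommGroup H] [InnerProductSpace ℝ H]

def feasible (Z : Set (E × Y)) (m : Measure E) : Set (Measure (E × Y)) :=
  {μ | IsProbabilityMeasure μ ∧ μ Zᶜ = 0 ∧ μ.map Prod.fst = m}

noncomputable def value (Z : Set (E × Y)) (g : E × Y → H) (f : H → ℝ) (m : Measure E) : ℝ :=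
  sInf ((fun μ => f (∫ z, g z ∂μ)) '' feasible Z m)

variable {Z : Set (E × Y)} {g : E × Y → H} {f : H → ℝ} {f' : H → H} {M C Lg : ℝ}

theorem bddBelow_cost [CompleteSpace H] (hconv : ConvexOn ℝ univ f)
    (hdiff : HasGradientAt f (f' 0) 0) (hM : ∀ z, ‖g z‖ ≤ M) (m : Measure E) :
    BddBelow ((fun μ => f (∫ z, g z ∂μ)) '' feasible Z m) := by
  refine ⟨f 0 - ‖f' 0‖ * M, ?_⟩
  rintro _ ⟨μ, ⟨hμ, -, -⟩, rfl⟩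
  have hbary : ‖∫ z, g z ∂μ‖ ≤ M := by
    simpa using norm_integral_le_of_norm_le_const (μ := μ) (.of_forall hM)
  have hconvex := hconv.le_add_norm_mul_norm_sub_of_hasGradientAt hdiff (∫ z, g z ∂μ)
  rw [zero_sub, norm_neg] at hconvex
  linarith [mul_le_mul_of_nonneg_left hbary (norm_nonneg (f' 0))]

theorem cost_le_cost_add [CompleteSpace H] (hconv : ConvexOn ℝ univ f)
    (hdiff : ∀ x, HasGradientAt f (f' x) x)
    (hC : ∀ μ : Measure (E × Y), IsProbabilityMeasure μ → μ Zᶜ = 0 → ‖f' (∫ z, g z ∂μ)‖ ≤ C)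
    {μ μ' : Measure (E × Y)} [IsProbabilityMeasure μ'] (hμ'Z : μ' Zᶜ = 0) {δ : ℝ}
    (hδ : ‖∫ z, g z ∂μ' - ∫ z, g z ∂μ‖ ≤ δ) :
    f (∫ z, g z ∂μ') ≤ f (∫ z, g z ∂μ) + C * δ := by
  have hgrad := hC μ' inferInstance hμ'Z
  have hconvex :=
    hconv.le_add_norm_mul_norm_sub_of_hasGradientAt (hdiff (∫ z, g z ∂μ')) (∫ z, g z ∂μ)
  linarith [mul_le_mul hgrad hδ (norm_nonneg _) ((norm_nonneg _).trans hgrad)]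

theorem map_mem_feasible {Ω : Type*} [MeasurableSpace Ω] {ρ : Measure Ω}
    [IsProbabilityMeasure ρ]
    (hZ : MeasurableSet Z) {s : Ω → E × Y} (hs : Measurable s) {π : Ω → E}
    {m : Measure E} (hρ : ρ.map π = m) (hsπ : ∀ᵐ ω ∂ρ, s ω ∈ Z ∧ (s ω).1 = π ω) :
    ρ.map s ∈ feasible Z m := by
  refine ⟨Measure.isProbabilityMeasure_map hs.aemeasurable, ?_, ?_⟩
  · exact mem_ae_iff.1 ((ae_map_iff hs.aemeasurable hZ).2 (hsπ.mono fun _ h => h.1))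
  · rw [Measure.map_map measurable_fst hs, ← hρ]
    exact Measure.map_congr (hsπ.mono fun _ h => h.2)

section Selection

variable [PseudoMetricSpace E] {X : Set E} {s : (E × Y) × E → E × Y}

theorem map_selection_mem_feasible_and_norm_sub_le (hZ : MeasurableSet Z)
    (hg : StronglyMeasurable g) (hM : ∀ z, ‖g z‖ ≤ M) (hs : Measurable s)
    (hsel : ∀ p : (E × Y) × E, p.1 ∈ Z → p.2 ∈ X →
      s p ∈ Z ∧ (s p).1 = p.2 ∧ ‖g (s p) - g p.1‖ ≤ Lg * dist p.1.1 p.2)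
    {ρ : Measure ((E × Y) × E)} [IsProbabilityMeasure ρ]
    (hint : Integrable (fun p : (E × Y) × E => dist p.1.1 p.2) ρ)
    {μ : Measure (E × Y)} (hρ1 : ρ.map Prod.fst = μ) (hμZ : μ Zᶜ = 0)
    {m : Measure E} (hρ2 : ρ.map Prod.snd = m) (hmX : m Xᶜ = 0) :
    ρ.map s ∈ feasible Z m ∧
      ‖∫ z, g z ∂(ρ.map s) - ∫ z, g z ∂μ‖ ≤ Lg * ∫ p, dist p.1.1 p.2 ∂ρ := by
  have hsel_ae : ∀ᵐ p ∂ρ, s p ∈ Z ∧ (s p).1 = p.2 ∧ ‖g (s p) - g p.1‖ ≤ Lg * dist p.1.1 p.2 :=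
    (ae_fst_mem_and_snd_mem (hρ1 ▸ hμZ) (hρ2 ▸ hmX)).mono fun p hp => hsel p hp.1 hp.2
  refine ⟨map_mem_feasible hZ hs hρ2 (hsel_ae.mono fun _ h => ⟨h.1, h.2.1⟩), ?_⟩
  rw [← integral_const_mul, ← hρ1]
  exact norm_integral_map_sub_le hg hM hs measurable_fst (hint.const_mul Lg)
    (hsel_ae.mono fun _ h => h.2.2)

theorem exists_reverse_plan [SecondCountableTopology E] [OpensMeasurableSpace E]
    {m₀ m₁ : Measure E} {ν : Measure ((E × Y) × E)} [IsProbabilityMeasure ν]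
    (hν₁ : (ν.map Prod.fst).map Prod.fst = m₀) (hν₂ : ν.map Prod.snd = m₁)
    (hνint : Integrable (fun p : (E × Y) × E => dist p.1.1 p.2) ν) :
    ∃ γ : Measure (E × E), IsProbabilityMeasure γ ∧ γ.map Prod.fst = m₁ ∧
      γ.map Prod.snd = m₀ ∧ Integrable (fun q : E × E => dist q.1 q.2) γ ∧
      ∫ q, dist q.1 q.2 ∂γ = ∫ p, dist p.1.1 p.2 ∂ν := by
  have hr : Measurable fun p : (E × Y) × E => (p.2, p.1.1) :=
    measurable_snd.prodMk (measurable_fst.comp measurable_fst)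
  have hdist : Continuous fun q : E × E => dist q.1 q.2 := continuous_fst.dist continuous_snd
  have hcomm : (fun q : E × E => dist q.1 q.2) ∘ (fun p : (E × Y) × E => (p.2, p.1.1)) =
      fun p => dist p.1.1 p.2 := funext fun _ => dist_comm _ _
  refine ⟨ν.map fun p => (p.2, p.1.1), Measure.isProbabilityMeasure_map hr.aemeasurable, ?_, ?_,
    ?_, ?_⟩
  · rw [Measure.map_map measurable_fst hr, ← hν₂]; rfl
  · rw [Measure.map_map measurable_snd hr, ← hν₁, Measure.map_map measurable_fst measurable_fst]
    rfl
  · rwa [integrable_map_measure hdist.aestronglyMeasurable hr.aemeasurable, hcomm]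
  · rw [integral_map hr.aemeasurable hdist.aestronglyMeasurable]
    exact congrArg (integral ν) hcomm

end Selection

section Transport

variable [MetricSpace E] [CompleteSpace E] [SecondCountableTopology E] [BorelSpace E]
  {X : Set E} {s : (E × Y) × E → E × Y} {m₀ m₁ : Measure E}

theorem exists_mem_feasible_norm_sub_le (hZ : MeasurableSet Z) (hg : StronglyMeasurable g)
    (hM : ∀ z, ‖g z‖ ≤ M) (hs : Measurable s)
    (hsel : ∀ p : (E × Y) × E, p.1 ∈ Z → p.2 ∈ X →
      s p ∈ Z ∧ (s p).1 = p.2 ∧ ‖g (s p) - g p.1‖ ≤ Lg * dist p.1.1 p.2)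
    (hm₀X : m₀ Xᶜ = 0) {γ : Measure (E × E)} [IsProbabilityMeasure γ]
    (hγ₁ : γ.map Prod.fst = m₁) (hγ₂ : γ.map Prod.snd = m₀)
    (hγint : Integrable (fun q : E × E => dist q.1 q.2) γ)
    {μ : Measure (E × Y)} (hμ : μ ∈ feasible Z m₁) :
    ∃ μ' ∈ feasible Z m₀, ‖∫ z, g z ∂μ' - ∫ z, g z ∂μ‖ ≤ Lg * ∫ q, dist q.1 q.2 ∂γ := by
  obtain ⟨hμ, hμZ, hμm⟩ := hμ
  have : Nonempty E := (nonempty_of_isProbabilityMeasure μ).map Prod.fst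
  obtain ⟨ρ, hρ, hρ₁, hρ₂⟩ :=
    exists_map_fst_eq_and_map_prodMap_eq measurable_fst (hμm.trans hγ₁.symm)
  have hF : Measurable (Prod.map Prod.fst id : (E × Y) × E → E × E) :=
    measurable_fst.prodMap measurable_id
  have hdist : Continuous fun q : E × E => dist q.1 q.2 := continuous_fst.dist continuous_snd
  have hρsnd : ρ.map Prod.snd = m₀ := by
    rw [← hγ₂, ← hρ₂, Measure.map_map measurable_snd hF]; rfl
  have hint : Integrable (fun p : (E × Y) × E => dist p.1.1 p.2) ρ := by
    rw [← hρ₂] at hγint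
    exact (integrable_map_measure hdist.aestronglyMeasurable hF.aemeasurable).1 hγint
  have hcost : ∫ p, dist p.1.1 p.2 ∂ρ = ∫ q, dist q.1 q.2 ∂γ := by
    rw [← hρ₂, integral_map hF.aemeasurable hdist.aestronglyMeasurable]; rfl
  rw [← hcost]
  exact ⟨_, map_selection_mem_feasible_and_norm_sub_le hZ hg hM hs hsel hint hρ₁ hμZ hρsnd hm₀X⟩

theorem value_le_value_add [CompleteSpace H] (hZ : MeasurableSet Z) (hg : StronglyMeasurable g)
    (hM : ∀ z, ‖g z‖ ≤ M) (hconv : ConvexOn ℝ univ f) (hdiff : ∀ x, HasGradientAt f (f' x) x)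
    (hC : ∀ μ : Measure (E × Y), IsProbabilityMeasure μ → μ Zᶜ = 0 → ‖f' (∫ z, g z ∂μ)‖ ≤ C)
    (hs : Measurable s)
    (hsel : ∀ p : (E × Y) × E, p.1 ∈ Z → p.2 ∈ X →
      s p ∈ Z ∧ (s p).1 = p.2 ∧ ‖g (s p) - g p.1‖ ≤ Lg * dist p.1.1 p.2)
    (hm₀X : m₀ Xᶜ = 0) {γ : Measure (E × E)} [IsProbabilityMeasure γ]
    (hγ₁ : γ.map Prod.fst = m₁) (hγ₂ : γ.map Prod.snd = m₀)
    (hγint : Integrable (fun q : E × E => dist q.1 q.2) γ) (hne : (feasible Z m₁).Nonempty) :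
    value Z g f m₀ ≤ value Z g f m₁ + C * (Lg * ∫ q, dist q.1 q.2 ∂γ) := by
  refine sInf_image_le_sInf_image_add (bddBelow_cost hconv (hdiff 0) hM m₀) hne fun μ hμ => ?_
  obtain ⟨μ', hμ', hclose⟩ :=
    exists_mem_feasible_norm_sub_le hZ hg hM hs hsel hm₀X hγ₁ hγ₂ hγint hμ
  have : IsProbabilityMeasure μ' := hμ'.1
  exact ⟨μ', hμ', cost_le_cost_add hconv hdiff hC hμ'.2.1 hclose⟩

end Transport

end MFO

theorem stmt_14_general {E Y H : Type*}
    [NormedAddCommGroup E] [CompleteSpace E]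
    [SecondCountableTopology E] [MeasurableSpace E] [BorelSpace E]
    [MetricSpace Y] [SecondCountableTopology Y]
    [MeasurableSpace Y] [BorelSpace Y]
    [NormedAddCommGroup H] [InnerProductSpace ℝ H] [CompleteSpace H]
    (X : Set E)
    (Z : Set (E × Y)) (hZc : IsClosed Z)
    (g : E × Y → H) (hgc : Continuous g) (M : ℝ) (hM : ∀ z, ‖g z‖ ≤ M)
    (f : H → ℝ) (f' : H → H)
    (hconv : ConvexOn ℝ Set.univ f)
    (hdiff : ∀ x, HasGradientAt f (f' x) x)
    (L : ℝ≥0)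
    (Lg C : ℝ) (hLg : 0 ≤ Lg)
    (hC : ∀ μ : Measure (E × Y), IsProbabilityMeasure μ → μ Zᶜ = 0 →
      ‖f' (∫ z, g z ∂μ)‖ ≤ C)
    (m0 m1 : Measure E)
    (hm0X : m0 Xᶜ = 0) (hm1X : m1 Xᶜ = 0)
    (V : Measure E → ℝ)
    (hV : ∀ m : Measure E, V m = sInf ((fun μ => f (∫ z, g z ∂μ)) ''
      {μ : Measure (E × Y) | IsProbabilityMeasure μ ∧ μ Zᶜ = 0 ∧ μ.map Prod.fst = m}))
    (d1 : ℝ)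
    (ε0 : ℝ)
    (μ0 : Measure (E × Y)) [IsProbabilityMeasure μ0]
    (hμ0Z : μ0 Zᶜ = 0) (hμ0m : μ0.map Prod.fst = m0)
    (hμ0min : f (∫ z, g z ∂μ0) ≤ V m0 + ε0)
    (ν : Measure ((E × Y) × E)) [IsProbabilityMeasure ν]
    (hν1 : ν.map Prod.fst = μ0) (hν2 : ν.map Prod.snd = m1)
    (hνint : Integrable (fun p : (E × Y) × E => dist p.1.1 p.2) ν)
    (hνopt : ∫ p : (E × Y) × E, dist p.1.1 p.2 ∂ν = d1)
    (s : (E × Y) × E → E × Y) (hs : Measurable s)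
    (hsel : ∀ p : (E × Y) × E, p.1 ∈ Z → p.2 ∈ X →
      s p ∈ Z ∧ (s p).1 = p.2 ∧ ‖g (s p) - g p.1‖ ≤ Lg * dist p.1.1 p.2)
    (μ1 : Measure (E × Y)) (hμ1 : μ1 = ν.map s) :
    (IsProbabilityMeasure μ1 ∧ μ1 Zᶜ = 0 ∧ μ1.map Prod.fst = m1) ∧
    f (∫ z, g z ∂μ1) ≤ V m1 + (ε0 + 2 * Lg * (C + (L : ℝ) * M) * d1) := by
  subst hμ1 hνopt
  have hZ : MeasurableSet Z := hZc.measurableSet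
  have hg : StronglyMeasurable g := hgc.stronglyMeasurable
  obtain ⟨hμ1, hclose⟩ := MFO.map_selection_mem_feasible_and_norm_sub_le hZ hg hM hs hsel
    hνint hν1 hμ0Z hν2 hm1X
  have : IsProbabilityMeasure (ν.map s) := hμ1.1
  have hcost := MFO.cost_le_cost_add hconv hdiff hC hμ1.2.1 hclose
  obtain ⟨γ, hγ, hγ₁, hγ₂, hγint, hγcost⟩ :=
    MFO.exists_reverse_plan (by rw [hν1, hμ0m]) hν2 hνint
  have hvalue : V m0 ≤ V m1 + C * (Lg * ∫ p, dist p.1.1 p.2 ∂ν) := by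
    rw [hV, hV, ← hγcost]
    exact MFO.value_le_value_add hZ hg hM hconv hdiff hC hs hsel hm0X hγ₁ hγ₂ hγint ⟨_, hμ1⟩
  have hM0 : 0 ≤ M := (norm_nonneg _).trans
    (by simpa using norm_integral_le_of_norm_le_const (μ := μ0) (.of_forall hM))
  have hslack : 0 ≤ Lg * (L * M) * ∫ p, dist p.1.1 p.2 ∂ν :=
    mul_nonneg (mul_nonneg hLg (mul_nonneg L.coe_nonneg hM0)) (integral_nonneg fun _ => dist_nonneg)
  exact ⟨hμ1, by linarith⟩

/-- The bridging method maps an `ε₀`-minimizer `μ̄₀` for the marginal `m₀` to an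
`η`-minimizer `μ₁` for the marginal `m₁`, with
`η = ε₀ + 2 L_g (C + L M) d₁(m₀, m₁)`. -/
theorem stmt_14 {E Y H : Type*}
    [NormedAddCommGroup E] [NormedSpace ℝ E] [CompleteSpace E]
    [SecondCountableTopology E] [MeasurableSpace E] [BorelSpace E]
    [MetricSpace Y] [CompleteSpace Y] [SecondCountableTopology Y]
    [MeasurableSpace Y] [BorelSpace Y]
    [NormedAddCommGroup H] [InnerProductSpace ℝ H] [CompleteSpace H]
    [SecondCountableTopology H] [MeasurableSpace H] [BorelSpace H]
    (X : Set E) (hX : IsClosed X)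
    (Z : Set (E × Y)) (hZc : IsClosed Z) (hZX : ∀ z ∈ Z, z.1 ∈ X)
    (hsec : ∀ x ∈ X, IsCompact {y | (x, y) ∈ Z} ∧ {y | (x, y) ∈ Z}.Nonempty)
    (husc : ∀ x ∈ X, ∀ U : Set Y, IsOpen U → {y | (x, y) ∈ Z} ⊆ U →
      ∃ η > (0 : ℝ), ∀ x' ∈ X, dist x x' < η → {y | (x', y) ∈ Z} ⊆ U)
    (g : E × Y → H) (hgc : Continuous g) (M : ℝ) (hM : ∀ z, ‖g z‖ ≤ M)
    (f : H → ℝ) (f' : H → H)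
    (hconv : ConvexOn ℝ Set.univ f)
    (hdiff : ∀ x, HasGradientAt f (f' x) x)
    (L : ℝ≥0) (hlipf : LipschitzWith L f')
    (Lg C : ℝ) (hLg : 0 ≤ Lg)
    (hlip : ∀ x₁ ∈ X, ∀ x₂ ∈ X, ∀ y₁, (x₁, y₁) ∈ Z →
      ∃ y₂, (x₂, y₂) ∈ Z ∧ ‖g (x₂, y₂) - g (x₁, y₁)‖ ≤ Lg * dist x₁ x₂)
    (hC : ∀ μ : Measure (E × Y), IsProbabilityMeasure μ → μ Zᶜ = 0 →
      ‖f' (∫ z, g z ∂μ)‖ ≤ C)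
    (m0 m1 : Measure E) [IsProbabilityMeasure m0] [IsProbabilityMeasure m1]
    (hm0X : m0 Xᶜ = 0) (hm1X : m1 Xᶜ = 0)
    (hm0 : ∃ x₀ : E, Integrable (fun x => dist x x₀) m0)
    (hm1 : ∃ x₀ : E, Integrable (fun x => dist x x₀) m1)
    (V : Measure E → ℝ)
    (hV : ∀ m : Measure E, V m = sInf ((fun μ => f (∫ z, g z ∂μ)) ''
      {μ : Measure (E × Y) | IsProbabilityMeasure μ ∧ μ Zᶜ = 0 ∧ μ.map Prod.fst = m}))
    (d1 : ℝ)
    (hd1 : d1 = sSup {r | ∃ F : E → ℝ, LipschitzWith 1 F ∧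
      r = ∫ x, F x ∂m0 - ∫ x, F x ∂m1})
    (ε0 : ℝ) (hε0 : 0 ≤ ε0)
    (μ0 : Measure (E × Y)) [IsProbabilityMeasure μ0]
    (hμ0Z : μ0 Zᶜ = 0) (hμ0m : μ0.map Prod.fst = m0)
    (hμ0min : f (∫ z, g z ∂μ0) ≤ V m0 + ε0)
    (ν : Measure ((E × Y) × E)) [IsProbabilityMeasure ν]
    (hν1 : ν.map Prod.fst = μ0) (hν2 : ν.map Prod.snd = m1)
    (hνint : Integrable (fun p : (E × Y) × E => dist p.1.1 p.2) ν)
    (hνopt : ∫ p : (E × Y) × E, dist p.1.1 p.2 ∂ν = d1)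
    (s : (E × Y) × E → E × Y) (hs : Measurable s)
    (hsel : ∀ p : (E × Y) × E, p.1 ∈ Z → p.2 ∈ X →
      s p ∈ Z ∧ (s p).1 = p.2 ∧ ‖g (s p) - g p.1‖ ≤ Lg * dist p.1.1 p.2)
    (μ1 : Measure (E × Y)) (hμ1 : μ1 = ν.map s) :
    (IsProbabilityMeasure μ1 ∧ μ1 Zᶜ = 0 ∧ μ1.map Prod.fst = m1) ∧
    f (∫ z, g z ∂μ1) ≤ V m1 + (ε0 + 2 * Lg * (C + (L : ℝ) * M) * d1) :=
  stmt_14_general X Z hZc g hgc M hM f f' hconv hdiff L Lg C hLg hC m0 m1 hm0X hm1X V hV d1 ε0 μ0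
    hμ0Z hμ0m hμ0min ν hν1 hν2 hνint hνopt s hs hsel μ1 hμ1
end

section
/- Let f : H → ℝ be convex differentiable with L-Lipschitz gradient on a Hilbert space H, and let u_λ(x) = inf_{y ∈ Z_x} ⟨λ, g(x,y)⟩ with g bounded. Then the dual functional D_m(λ) = f*(λ) − ∫_X u_λ dm, defined on dom(f*), is strongly convex with modulus 1/L; consequently D_m has a unique minimizer λ*(m) on dom(f*). Moreover, fixing any λ₀ ∈ dom(f*) and p₀ ∈ ∂f*(λ₀), one has ‖λ*(m)‖ ≤ 3‖λ₀‖ + 2L(M + ‖p₀‖) with M = sup_z ‖g(z)‖, uniformly in m. -/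
/-!
The descent lemma `f (x + d) ≤ f x + ⟪∇f x, d⟫ + L/2 ‖d‖²` for an `L`-Lipschitz gradient makes
`f*` `1/L`-strongly convex: test the supremum defining `f* λ` and `f* μ` at two points whose
`(a, b)`-average is a given `x`. Each `u_λ(x)` is an infimum of the bounded linear maps
`λ ↦ ⟪λ, g(x, y)⟫`, hence concave and `M`-Lipschitz in `λ`, and so is `∫ u_λ dm`; thus
`D_m = f* - ∫ u_λ dm` is `1/L`-strongly convex, and its epigraph is closed. A minimizing
sequence of a strongly convex function is Cauchy, so `D_m` has a minimizer `λ*`, unique by strict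
convexity. The subgradient `p₀` gives `D_m λ ≥ D_m λ₀ - (M + ‖p₀‖)‖λ - λ₀‖`, and together with the
quadratic growth `D_m λ₀ ≥ D_m λ* + ‖λ* - λ₀‖² / (2L)` this yields `‖λ* - λ₀‖ ≤ 2L(M + ‖p₀‖)`.
-/

open MeasureTheory Set Filter Topology
open scoped RealInnerProductSpace NNReal

section Descent

variable {H : Type*} [NormedAddCommGroup H] [InnerProductSpace ℝ H] [CompleteSpace H]
  {f : H → ℝ} {f' : H → H} {K : ℝ≥0}

theorem le_add_inner_add_of_lipschitzWith_gradient (hf : ∀ x, HasGradientAt f (f' x) x)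
    (hf' : LipschitzWith K f') (x d : H) :
    f (x + d) ≤ f x + ⟪f' x, d⟫ + K / 2 * ‖d‖ ^ 2 := by
  let φ : ℝ → ℝ := fun t ↦ f (x + t • d) - t * ⟪f' x, d⟫ - K / 2 * t ^ 2 * ‖d‖ ^ 2
  have hφ : ∀ t, HasDerivAt φ (⟪f' (x + t • d) - f' x, d⟫ - K * t * ‖d‖ ^ 2) t := by
    intro t
    have hline : HasDerivAt (fun t : ℝ ↦ x + t • d) d t := by
      simpa using ((hasDerivAt_id t).smul_const d).const_add x
    have hcomp := (hf (x + t • d)).hasFDerivAt.comp_hasDerivAt t hline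
    rw [InnerProductSpace.toDual_apply_apply] at hcomp
    refine ((hcomp.sub ((hasDerivAt_id t).mul_const ⟪f' x, d⟫)).sub
      (((hasDerivAt_pow 2 t).const_mul (K / 2 : ℝ)).mul_const (‖d‖ ^ 2))).congr_deriv ?_
    rw [inner_sub_left]
    push_cast
    ring
  have hanti : AntitoneOn φ (Icc 0 1) := by
    refine antitoneOn_of_deriv_nonpos (convex_Icc 0 1)
      (fun t _ ↦ (hφ t).continuousAt.continuousWithinAt)
      (fun t _ ↦ (hφ t).differentiableAt.differentiableWithinAt) fun t ht ↦ ?_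
    rw [interior_Icc] at ht
    have hlip : ‖f' (x + t • d) - f' x‖ ≤ K * (t * ‖d‖) := by
      simpa [dist_eq_norm, norm_smul, abs_of_pos ht.1] using hf'.dist_le_mul (x + t • d) x
    rw [(hφ t).deriv]
    nlinarith [real_inner_le_norm (f' (x + t • d) - f' x) d, norm_nonneg d]
  have := hanti (left_mem_Icc.2 zero_le_one) (right_mem_Icc.2 zero_le_one) zero_le_one
  simp only [φ, one_smul, zero_smul, add_zero, one_mul, one_pow, zero_mul, sub_zero,
    zero_pow two_ne_zero, mul_zero] at this
  linarith

end Descent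

section Conjugate

variable {H : Type*} [NormedAddCommGroup H] [InnerProductSpace ℝ H] {f : H → ℝ} {f' : H → H}
  {L : ℝ}

/-- The convex conjugate `f*`; a junk `0` off `conjugateDomain f`, where the supremum is
unbounded. -/
noncomputable def conjugate (f : H → ℝ) (lam : H) : ℝ := ⨆ x, ⟪lam, x⟫ - f x

def conjugateDomain (f : H → ℝ) : Set H := {lam | BddAbove (range fun x ↦ ⟪lam, x⟫ - f x)}

lemma inner_sub_le_conjugate {lam : H} (hlam : lam ∈ conjugateDomain f) (x : H) :
    ⟪lam, x⟫ - f x ≤ conjugate f lam :=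
  le_ciSup hlam x

lemma mem_conjugateDomain_and_conjugate_le {lam : H} {c : ℝ} (h : ∀ x, ⟪lam, x⟫ - f x ≤ c) :
    lam ∈ conjugateDomain f ∧ conjugate f lam ≤ c :=
  ⟨⟨c, forall_mem_range.2 h⟩, ciSup_le h⟩

lemma inner_sub_le_of_le_add_inner_add (hL : 0 < L)
    (hf : ∀ x d, f (x + d) ≤ f x + ⟪f' x, d⟫ + L / 2 * ‖d‖ ^ 2)
    {lam mu : H} (hlam : lam ∈ conjugateDomain f) (hmu : mu ∈ conjugateDomain f)
    {a b : ℝ} (ha : 0 ≤ a) (hb : 0 ≤ b) (hab : a + b = 1) (x : H) :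
    ⟪a • lam + b • mu, x⟫ - f x ≤
      a * conjugate f lam + b * conjugate f mu - a * b * (1 / L / 2 * ‖lam - mu‖ ^ 2) := by
  -- `x + (b/L) d` and `x - (a/L) d` average to `x`, and the cross terms in `f' x` cancel.
  set d := lam - mu
  have hd : ⟪lam, d⟫ - ⟪mu, d⟫ = ‖d‖ ^ 2 := by rw [← inner_sub_left, real_inner_self_eq_norm_sq]
  have hlam' : ⟪lam, x + (b / L) • d⟫ - (f x + ⟪f' x, (b / L) • d⟫ + L / 2 * ‖(b / L) • d‖ ^ 2)
      ≤ conjugate f lam := by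
    linarith [inner_sub_le_conjugate hlam (x + (b / L) • d), hf x ((b / L) • d)]
  have hmu' : ⟪mu, x + (-(a / L)) • d⟫ -
      (f x + ⟪f' x, (-(a / L)) • d⟫ + L / 2 * ‖(-(a / L)) • d‖ ^ 2) ≤ conjugate f mu := by
    linarith [inner_sub_le_conjugate hmu (x + (-(a / L)) • d), hf x ((-(a / L)) • d)]
  simp only [inner_add_left, inner_add_right, real_inner_smul_left, real_inner_smul_right,
    norm_smul, mul_pow, Real.norm_eq_abs, sq_abs] at hlam' hmu' ⊢
  obtain rfl : b = 1 - a := by linarith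
  have hA := mul_le_mul_of_nonneg_left hlam' ha
  have hB := mul_le_mul_of_nonneg_left hmu' hb
  have hL' : L * L⁻¹ = 1 := mul_inv_cancel₀ hL.ne'
  linear_combination hA + hB - a * (1 - a) / L * hd + (‖d‖ ^ 2 / 2 * a * (1 - a) / L) * hL'

theorem strongConvexOn_conjugate (hL : 0 < L)
    (hf : ∀ x d, f (x + d) ≤ f x + ⟪f' x, d⟫ + L / 2 * ‖d‖ ^ 2) :
    StrongConvexOn (conjugateDomain f) (1 / L) (conjugate f) :=
  ⟨fun _ hlam _ hmu _ _ ha hb hab ↦ (mem_conjugateDomain_and_conjugate_le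
      (inner_sub_le_of_le_add_inner_add hL hf hlam hmu ha hb hab)).1,
    fun _ hlam _ hmu _ _ ha hb hab ↦ (mem_conjugateDomain_and_conjugate_le
      (inner_sub_le_of_le_add_inner_add hL hf hlam hmu ha hb hab)).2⟩

end Conjugate

section InfInner

lemma ciInf_le_ciInf_add {ι κ : Type*} [Nonempty ι] {F : κ → ℝ} {G : ι → ℝ} {c : ℝ}
    (hF : BddBelow (range F)) (h : ∀ i, ∃ j, F j ≤ G i + c) : ⨅ j, F j ≤ (⨅ i, G i) + c := by
  rw [← sub_le_iff_le_add]
  refine le_ciInf fun i ↦ ?_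
  obtain ⟨j, hj⟩ := h i
  exact sub_le_iff_le_add.2 ((ciInf_le hF j).trans hj)

variable {ι H : Type*} [NormedAddCommGroup H] [InnerProductSpace ℝ H] {v : ι → H} {M : ℝ}

lemma abs_inner_le_mul (hv : ∀ i, ‖v i‖ ≤ M) (lam : H) (i : ι) : |⟪lam, v i⟫| ≤ ‖lam‖ * M :=
  (abs_real_inner_le_norm lam (v i)).trans (by gcongr; exact hv i)

lemma bddBelow_range_inner (hv : ∀ i, ‖v i‖ ≤ M) (lam : H) :
    BddBelow (range fun i ↦ ⟪lam, v i⟫) :=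
  ⟨-(‖lam‖ * M), forall_mem_range.2 fun i ↦ neg_le_of_abs_le (abs_inner_le_mul hv lam i)⟩

lemma abs_iInf_inner_le [Nonempty ι] (hv : ∀ i, ‖v i‖ ≤ M) (lam : H) :
    |⨅ i, ⟪lam, v i⟫| ≤ ‖lam‖ * M := by
  obtain ⟨i⟩ := ‹Nonempty ι›
  refine abs_le.2 ⟨le_ciInf fun j ↦ (abs_le.1 (abs_inner_le_mul hv lam j)).1, ?_⟩
  exact (ciInf_le (bddBelow_range_inner hv lam) i).trans (abs_le.1 (abs_inner_le_mul hv lam i)).2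

lemma iInf_inner_le_add [Nonempty ι] (hv : ∀ i, ‖v i‖ ≤ M) (lam mu : H) :
    ⨅ i, ⟪lam, v i⟫ ≤ (⨅ i, ⟪mu, v i⟫) + M * ‖lam - mu‖ := by
  refine ciInf_le_ciInf_add (bddBelow_range_inner hv lam) fun i ↦ ⟨i, ?_⟩
  have := (le_abs_self _).trans (abs_inner_le_mul hv (lam - mu) i)
  rw [inner_sub_left] at this
  linarith

lemma concaveOn_iInf_inner [Nonempty ι] (hv : ∀ i, ‖v i‖ ≤ M) :
    ConcaveOn ℝ univ fun lam : H ↦ ⨅ i, ⟪lam, v i⟫ :=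
  ⟨convex_univ, fun lam _ mu _ a b ha hb _ ↦ le_ciInf fun i ↦ by
    rw [inner_add_left, real_inner_smul_left, real_inner_smul_left, smul_eq_mul, smul_eq_mul]
    gcongr <;> exact ciInf_le (bddBelow_range_inner hv _) i⟩

end InfInner

section Integral

variable {X E : Type*} [MeasurableSpace X] {μ : Measure X} [AddCommGroup E] [Module ℝ E]

lemma concaveOn_integral {s : Set E} {F : E → X → ℝ} (hs : Convex ℝ s)
    (hF : ∀ x, ConcaveOn ℝ s (F · x)) (hint : ∀ lam ∈ s, Integrable (F lam) μ) :
    ConcaveOn ℝ s fun lam ↦ ∫ x, F lam x ∂μ := by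
  refine ⟨hs, fun lam hlam mu hmu a b ha hb hab ↦ ?_⟩
  have hlam' := (hint lam hlam).const_mul a
  have hmu' := (hint mu hmu).const_mul b
  rw [smul_eq_mul, smul_eq_mul, ← integral_const_mul, ← integral_const_mul,
    ← integral_add hlam' hmu']
  exact integral_mono (hlam'.add hmu') (hint _ (hs hlam hmu ha hb hab))
    fun x ↦ (hF x).2 hlam hmu ha hb hab

lemma integral_le_integral_add_of_le_add [IsProbabilityMeasure μ] {φ ψ : X → ℝ} {c : ℝ}
    (hφ : Integrable φ μ) (hψ : Integrable ψ μ) (h : ∀ x, φ x ≤ ψ x + c) :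
    ∫ x, φ x ∂μ ≤ ∫ x, ψ x ∂μ + c := by
  calc ∫ x, φ x ∂μ ≤ ∫ x, (ψ x + c) ∂μ := integral_mono hφ (hψ.add (integrable_const c)) h
    _ = ∫ x, ψ x ∂μ + c := by simp [integral_add hψ (integrable_const c)]

end Integral

section LowerEnvelope

variable {X Y H : Type*} [NormedAddCommGroup H] [InnerProductSpace ℝ H]
  {Z : Set (X × Y)} {g : X × Y → H} {M : ℝ}

/-- The paper's `u_λ(x)`. -/
noncomputable def lowerEnvelope (Z : Set (X × Y)) (g : X × Y → H) (lam : H) (x : X) : ℝ :=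
  ⨅ y : {y // (x, y) ∈ Z}, ⟪lam, g (x, y)⟫

lemma lowerEnvelope_eq_sInf (lam : H) (x : X) :
    lowerEnvelope Z g lam x = sInf {r | ∃ y, (x, y) ∈ Z ∧ r = ⟪lam, g (x, y)⟫} := by
  rw [lowerEnvelope, iInf]
  congr 1
  ext r
  simp [eq_comm]

variable (hZ : ∀ x, ∃ y, (x, y) ∈ Z) (hg : ∀ z, ‖g z‖ ≤ M)
include hZ hg

lemma concaveOn_lowerEnvelope (x : X) : ConcaveOn ℝ univ fun lam ↦ lowerEnvelope Z g lam x :=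
  have := nonempty_subtype.2 (hZ x)
  concaveOn_iInf_inner (v := fun y : {y // (x, y) ∈ Z} ↦ g (x, y)) fun _ ↦ hg _

lemma lowerEnvelope_le_add (lam mu : H) (x : X) :
    lowerEnvelope Z g lam x ≤ lowerEnvelope Z g mu x + M * ‖lam - mu‖ :=
  have := nonempty_subtype.2 (hZ x)
  iInf_inner_le_add (v := fun y : {y // (x, y) ∈ Z} ↦ g (x, y)) (fun _ ↦ hg _) lam mu

lemma abs_lowerEnvelope_le (lam : H) (x : X) : |lowerEnvelope Z g lam x| ≤ ‖lam‖ * M :=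
  have := nonempty_subtype.2 (hZ x)
  abs_iInf_inner_le (v := fun y : {y // (x, y) ∈ Z} ↦ g (x, y)) (fun _ ↦ hg _) lam

variable [PseudoMetricSpace X] {Lg : ℝ}
  (hZg : ∀ x₁ x₂ : X, ∀ y₁, (x₁, y₁) ∈ Z →
    ∃ y₂, (x₂, y₂) ∈ Z ∧ ‖g (x₂, y₂) - g (x₁, y₁)‖ ≤ Lg * dist x₁ x₂)
include hZg

lemma lipschitzWith_lowerEnvelope (lam : H) :
    LipschitzWith (Real.toNNReal (‖lam‖ * Lg)) (lowerEnvelope Z g lam) := by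
  refine LipschitzWith.of_le_add_mul' _ fun x₁ x₂ ↦ ?_
  have := nonempty_subtype.2 (hZ x₂)
  refine ciInf_le_ciInf_add
    (bddBelow_range_inner (v := fun y : {y // (x₁, y) ∈ Z} ↦ g (x₁, y)) (fun _ ↦ hg _) lam)
    fun y₂ ↦ ?_
  obtain ⟨y₁, hy₁, hclose⟩ := hZg x₂ x₁ y₂ y₂.2
  refine ⟨⟨y₁, hy₁⟩, ?_⟩
  have hinner := real_inner_le_norm lam (g (x₁, y₁) - g (x₂, y₂))
  rw [inner_sub_right] at hinner
  rw [dist_comm] at hclose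
  nlinarith [norm_nonneg lam]

variable [MeasurableSpace X] [OpensMeasurableSpace X] {μ : Measure X}

lemma integrable_lowerEnvelope [IsFiniteMeasure μ] (lam : H) :
    Integrable (lowerEnvelope Z g lam) μ :=
  .of_bound (lipschitzWith_lowerEnvelope hZ hg hZg lam).continuous.aestronglyMeasurable
    (‖lam‖ * M) (ae_of_all _ fun x ↦ abs_lowerEnvelope_le hZ hg lam x)

lemma concaveOn_integral_lowerEnvelope [IsFiniteMeasure μ] :
    ConcaveOn ℝ univ fun lam ↦ ∫ x, lowerEnvelope Z g lam x ∂μ :=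
  concaveOn_integral convex_univ (concaveOn_lowerEnvelope hZ hg) fun lam _ ↦
    integrable_lowerEnvelope hZ hg hZg lam

lemma integral_lowerEnvelope_le_add [IsProbabilityMeasure μ] (lam mu : H) :
    ∫ x, lowerEnvelope Z g lam x ∂μ ≤ ∫ x, lowerEnvelope Z g mu x ∂μ + M * ‖lam - mu‖ :=
  integral_le_integral_add_of_le_add (integrable_lowerEnvelope hZ hg hZg lam)
    (integrable_lowerEnvelope hZ hg hZg mu) (lowerEnvelope_le_add hZ hg lam mu)

end LowerEnvelope

section ConjugateSub

variable {H : Type*} [NormedAddCommGroup H] [InnerProductSpace ℝ H] {f G : H → ℝ} {f' : H → H}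
  {L : ℝ}

theorem strongConvexOn_conjugate_sub (hL : 0 < L)
    (hf : ∀ x d, f (x + d) ≤ f x + ⟪f' x, d⟫ + L / 2 * ‖d‖ ^ 2) (hG : ConcaveOn ℝ univ G) :
    StrongConvexOn (conjugateDomain f) (1 / L) (conjugate f - G) := by
  have hconj := strongConvexOn_conjugate hL hf
  have hsub := hconj.sub (hG.subset (subset_univ _) hconj.1).uniformConcaveOn_zero
  rwa [add_zero] at hsub

/-- `(λ, t)` lies in the epigraph iff `⟪λ, x⟫ - f x ≤ t + G λ` for every `x`. -/
lemma isClosed_epigraph_conjugate_sub (hG : Continuous G) :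
    IsClosed {p : H × ℝ | p.1 ∈ conjugateDomain f ∧ conjugate f p.1 - G p.1 ≤ p.2} := by
  have : {p : H × ℝ | p.1 ∈ conjugateDomain f ∧ conjugate f p.1 - G p.1 ≤ p.2} =
      ⋂ x, {p : H × ℝ | ⟪p.1, x⟫ - f x ≤ p.2 + G p.1} := by
    ext ⟨lam, t⟩
    simp only [mem_ofPred_eq, mem_iInter]
    refine ⟨fun ⟨hlam, hle⟩ x ↦ ?_, fun h ↦ ?_⟩
    · linarith [inner_sub_le_conjugate hlam x]
    · obtain ⟨hlam, hle⟩ := mem_conjugateDomain_and_conjugate_le h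
      exact ⟨hlam, by linarith⟩
  rw [this]
  exact isClosed_iInter fun x ↦ isClosed_le (by fun_prop) (by fun_prop)

end ConjugateSub

namespace StrongConvexOn

variable {E : Type*} [NormedAddCommGroup E] [NormedSpace ℝ E] {s : Set E} {m K : ℝ}
  {φ ψ : E → ℝ} {x x₀ y : E}

lemma congr (hφ : StrongConvexOn s m φ) (h : EqOn φ ψ s) : StrongConvexOn s m ψ := by
  refine ⟨hφ.1, fun x hx y hy a b ha hb hab ↦ ?_⟩
  rw [← h hx, ← h hy, ← h (hφ.1 hx hy ha hb hab)]
  exact hφ.2 hx hy ha hb hab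

lemma midpoint_mem_and_le (hφ : StrongConvexOn s m φ) (hx : x ∈ s) (hy : y ∈ s) :
    (2⁻¹ : ℝ) • x + (2⁻¹ : ℝ) • y ∈ s ∧
      φ ((2⁻¹ : ℝ) • x + (2⁻¹ : ℝ) • y) ≤ (φ x + φ y) / 2 - m / 8 * ‖x - y‖ ^ 2 := by
  refine ⟨hφ.1 hx hy (by norm_num) (by norm_num) (by norm_num), ?_⟩
  have := hφ.2 hx hy (by norm_num : (0 : ℝ) ≤ 2⁻¹) (by norm_num : (0 : ℝ) ≤ 2⁻¹) (by norm_num)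
  simp only [smul_eq_mul] at this
  linarith

lemma sq_norm_sub_le_of_forall_le {c : ℝ} (hφ : StrongConvexOn s m φ) (hc : ∀ z ∈ s, c ≤ φ z)
    (hx : x ∈ s) (hy : y ∈ s) : m / 4 * ‖x - y‖ ^ 2 ≤ (φ x - c) + (φ y - c) := by
  obtain ⟨hz, hle⟩ := hφ.midpoint_mem_and_le hx hy
  linarith [hc _ hz]

lemma bddBelow_image (hφ : StrongConvexOn s m φ) (hm : 0 < m) (hx₀ : x₀ ∈ s)
    (hlin : ∀ y ∈ s, φ x₀ - K * ‖y - x₀‖ ≤ φ y) : BddBelow (φ '' s) := by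
  refine ⟨φ x₀ - K ^ 2 / m, forall_mem_image.2 fun y hy ↦ ?_⟩
  obtain ⟨hz, hle⟩ := hφ.midpoint_mem_and_le hx₀ hy
  have hz' := hlin _ hz
  have : (2⁻¹ : ℝ) • x₀ + (2⁻¹ : ℝ) • y - x₀ = (2⁻¹ : ℝ) • (y - x₀) := by module
  rw [this, norm_smul, norm_inv, Real.norm_two] at hz'
  rw [norm_sub_rev] at hle
  rw [sub_le_iff_le_add, ← sub_le_iff_le_add', le_div_iff₀ hm]
  nlinarith [sq_nonneg (m * ‖y - x₀‖ - 2 * K)]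

theorem exists_isMinOn [CompleteSpace E] (hφ : StrongConvexOn s m φ) (hm : 0 < m)
    (hs : s.Nonempty) (hbdd : BddBelow (φ '' s))
    (hepi : IsClosed {p : E × ℝ | p.1 ∈ s ∧ φ p.1 ≤ p.2}) : ∃ x ∈ s, IsMinOn φ s x := by
  obtain ⟨t, ht_anti, ht_lim, ht_mem⟩ := exists_seq_tendsto_sInf (hs.image φ) hbdd
  choose x hxs hxt using ht_mem
  set c := sInf (φ '' s)
  have hc : ∀ z ∈ s, c ≤ φ z := fun z hz ↦ csInf_le hbdd (mem_image_of_mem φ hz)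
  have hcauchy : CauchySeq x := by
    refine cauchySeq_of_le_tendsto_0 (fun N ↦ √(8 / m * (t N - c))) (fun n k N hn hk ↦ ?_) ?_
    · have := hφ.sq_norm_sub_le_of_forall_le hc (hxs n) (hxs k)
      rw [hxt, hxt] at this
      rw [dist_eq_norm]
      refine Real.le_sqrt_of_sq_le ?_
      rw [div_mul_eq_mul_div, le_div_iff₀ hm]
      linarith [ht_anti hn, ht_anti hk]
    · simpa using ((ht_lim.sub_const c).const_mul (8 / m)).sqrt
  obtain ⟨y, hy⟩ := cauchySeq_tendsto_of_complete hcauchy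
  have hyc : (y, c) ∈ {p : E × ℝ | p.1 ∈ s ∧ φ p.1 ≤ p.2} :=
    hepi.mem_of_tendsto (hy.prodMk_nhds ht_lim) (.of_forall fun n ↦ ⟨hxs n, (hxt n).le⟩)
  exact ⟨y, hyc.1, isMinOn_iff.2 fun z hz ↦ hyc.2.trans (hc z hz)⟩

lemma add_sq_norm_sub_le_of_isMinOn (hφ : StrongConvexOn s m φ) (hmin : IsMinOn φ s x)
    (hx : x ∈ s) (hy : y ∈ s) : φ x + m / 2 * ‖x - y‖ ^ 2 ≤ φ y := by
  have key : ∀ t ∈ Ioo (0 : ℝ) 1, (1 - t) * (m / 2 * ‖x - y‖ ^ 2) ≤ φ y - φ x := by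
    rintro t ⟨ht₀, ht₁⟩
    have hconv := hφ.2 hx hy (sub_nonneg.2 ht₁.le) ht₀.le (sub_add_cancel 1 t)
    have hmin' :=
      isMinOn_iff.1 hmin _ (hφ.1 hx hy (sub_nonneg.2 ht₁.le) ht₀.le (sub_add_cancel 1 t))
    simp only [smul_eq_mul] at hconv
    nlinarith
  have hlim : Tendsto (fun t : ℝ ↦ (1 - t) * (m / 2 * ‖x - y‖ ^ 2)) (𝓝[>] 0)
      (𝓝 (m / 2 * ‖x - y‖ ^ 2)) := by
    have : Continuous fun t : ℝ ↦ (1 - t) * (m / 2 * ‖x - y‖ ^ 2) := by fun_prop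
    exact (this.tendsto' 0 _ (by simp)).mono_left nhdsWithin_le_nhds
  linarith [le_of_tendsto hlim (eventually_of_mem (Ioo_mem_nhdsGT one_pos) key)]

theorem norm_sub_le_of_isMinOn (hφ : StrongConvexOn s m φ) (hm : 0 < m) (hmin : IsMinOn φ s x)
    (hx : x ∈ s) (hx₀ : x₀ ∈ s) (hK : 0 ≤ K) (hlin : ∀ y ∈ s, φ x₀ - K * ‖y - x₀‖ ≤ φ y) :
    ‖x - x₀‖ ≤ 2 * K / m := by
  have hgrowth := hφ.add_sq_norm_sub_le_of_isMinOn hmin hx hx₀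
  have := hlin x hx
  rw [le_div_iff₀ hm]
  nlinarith [norm_nonneg (x - x₀)]

theorem exists_isMinOn_norm_sub_le [CompleteSpace E] (hφ : StrongConvexOn s m φ) (hm : 0 < m)
    (hepi : IsClosed {p : E × ℝ | p.1 ∈ s ∧ φ p.1 ≤ p.2}) (hx₀ : x₀ ∈ s) (hK : 0 ≤ K)
    (hlin : ∀ y ∈ s, φ x₀ - K * ‖y - x₀‖ ≤ φ y) :
    ∃ x ∈ s, IsMinOn φ s x ∧ ‖x - x₀‖ ≤ 2 * K / m := by
  obtain ⟨x, hx, hmin⟩ := hφ.exists_isMinOn hm ⟨x₀, hx₀⟩ (hφ.bddBelow_image hm hx₀ hlin) hepi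
  exact ⟨x, hx, hmin, hφ.norm_sub_le_of_isMinOn hm hmin hx hx₀ hK hlin⟩

end StrongConvexOn

theorem stmt_15_general {X Y H : Type*}
    [MetricSpace X] [MeasurableSpace X] [BorelSpace X]
    [NormedAddCommGroup H] [InnerProductSpace ℝ H] [CompleteSpace H]
    (Z : Set (X × Y)) (hZne : ∀ x : X, ∃ y, (x, y) ∈ Z)
    (g : X × Y → H) (M : ℝ) (hM : ∀ z, ‖g z‖ ≤ M)
    (Lg : ℝ)
    (hZlip : ∀ x₁ x₂ : X, ∀ y₁, (x₁, y₁) ∈ Z →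
      ∃ y₂, (x₂, y₂) ∈ Z ∧ ‖g (x₂, y₂) - g (x₁, y₁)‖ ≤ Lg * dist x₁ x₂)
    (f : H → ℝ) (f' : H → H)
    (hdiff : ∀ x, HasGradientAt f (f' x) x)
    (L : ℝ) (hL : 0 < L) (hlipf : LipschitzWith (Real.toNNReal L) f')
    (u : H → X → ℝ)
    (hu : ∀ lam x, u lam x = sInf {r | ∃ y, (x, y) ∈ Z ∧ r = ⟪lam, g (x, y)⟫})
    (dom : Set H)
    (hdom : dom = {lam | BddAbove (Set.range fun x => ⟪lam, x⟫ - f x)})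
    (fstar : H → ℝ)
    (hfstar : ∀ lam ∈ dom, fstar lam = sSup (Set.range fun x => ⟪lam, x⟫ - f x))
    (m : Measure X) [IsProbabilityMeasure m]
    (D : H → ℝ) (hD : ∀ lam, D lam = fstar lam - ∫ x, u lam x ∂m)
    (lam0 : H) (hlam0 : lam0 ∈ dom) (p0 : H)
    (hp0 : ∀ lam ∈ dom, fstar lam0 + ⟪p0, lam - lam0⟫ ≤ fstar lam) :
    StrongConvexOn dom (1 / L) D ∧
    ∃ lamstar : H, (lamstar ∈ dom ∧ ∀ lam ∈ dom, D lamstar ≤ D lam) ∧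
      (∀ lam' ∈ dom, (∀ lam ∈ dom, D lam' ≤ D lam) → lam' = lamstar) ∧
      ‖lamstar‖ ≤ 3 * ‖lam0‖ + 2 * L * (M + ‖p0‖) := by
  obtain rfl : dom = conjugateDomain f := hdom
  obtain rfl : u = lowerEnvelope Z g :=
    funext₂ fun lam x ↦ (hu lam x).trans (lowerEnvelope_eq_sInf lam x).symm
  set I : H → ℝ := fun lam ↦ ∫ x, lowerEnvelope Z g lam x ∂m
  have hI_le : ∀ lam mu, I lam ≤ I mu + M * ‖lam - mu‖ :=
    integral_lowerEnvelope_le_add hZne hM hZlip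
  have hDeq : EqOn (conjugate f - I) D (conjugateDomain f) := fun lam hlam ↦ by
    rw [hD, hfstar lam hlam]
    rfl
  have hSC : StrongConvexOn (conjugateDomain f) (1 / L) D :=
    (strongConvexOn_conjugate_sub hL (fun x d ↦ by
      simpa only [Real.coe_toNNReal _ hL.le] using
        le_add_inner_add_of_lipschitzWith_gradient hdiff hlipf x d)
      (concaveOn_integral_lowerEnvelope hZne hM hZlip)).congr hDeq
  have hepi : IsClosed {p : H × ℝ | p.1 ∈ conjugateDomain f ∧ D p.1 ≤ p.2} := by
    have hIcont : Continuous I := (LipschitzWith.of_le_add_mul' M fun lam mu ↦ by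
      rw [dist_eq_norm]; exact hI_le lam mu).continuous
    convert isClosed_epigraph_conjugate_sub (f := f) hIcont using 3 with p
    exact and_congr_right fun h ↦ by rw [← hDeq h]; rfl
  have hlin : ∀ lam ∈ conjugateDomain f, D lam0 - (M + ‖p0‖) * ‖lam - lam0‖ ≤ D lam := by
    intro lam hlam
    simp only [hD]
    linarith [hp0 lam hlam, hI_le lam lam0,
      neg_le_of_abs_le (abs_real_inner_le_norm p0 (lam - lam0))]
  have hM0 : 0 ≤ M := by
    obtain ⟨x⟩ := nonempty_of_isProbabilityMeasure m
    obtain ⟨y, -⟩ := hZne x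
    exact (norm_nonneg _).trans (hM (x, y))
  obtain ⟨lamstar, hmem, hmin, hdist⟩ :=
    hSC.exists_isMinOn_norm_sub_le (by positivity) hepi hlam0 (by positivity) hlin
  refine ⟨hSC, lamstar, ⟨hmem, isMinOn_iff.1 hmin⟩, fun lam' hlam' hmin' ↦
    (hSC.strictConvexOn (by positivity)).eq_of_isMinOn (isMinOn_iff.2 hmin') hmin hlam' hmem, ?_⟩
  rw [div_div_eq_mul_div, div_one] at hdist
  linarith [norm_le_insert' lamstar lam0, norm_nonneg lam0]

/-- The dual functional `D_m(λ) = f*(λ) − ∫ u_λ dm` is `(1/L)`-strongly convex on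
`dom(f*)`, admits a unique minimizer `λ*(m)` there, and `‖λ*(m)‖` is bounded by
`3‖λ₀‖ + 2L(M + ‖p₀‖)` uniformly in `m`, for any `λ₀ ∈ dom(f*)` and `p₀ ∈ ∂f*(λ₀)`. -/
theorem stmt_15 {X Y H : Type*}
    [MetricSpace X] [MeasurableSpace X] [BorelSpace X]
    [MetricSpace Y]
    [NormedAddCommGroup H] [InnerProductSpace ℝ H] [CompleteSpace H]
    (Z : Set (X × Y)) (hZne : ∀ x : X, ∃ y, (x, y) ∈ Z)
    (g : X × Y → H) (M : ℝ) (hM : ∀ z, ‖g z‖ ≤ M)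
    (Lg : ℝ) (hLg : 0 ≤ Lg)
    (hZlip : ∀ x₁ x₂ : X, ∀ y₁, (x₁, y₁) ∈ Z →
      ∃ y₂, (x₂, y₂) ∈ Z ∧ ‖g (x₂, y₂) - g (x₁, y₁)‖ ≤ Lg * dist x₁ x₂)
    (f : H → ℝ) (f' : H → H)
    (hconv : ConvexOn ℝ Set.univ f)
    (hdiff : ∀ x, HasGradientAt f (f' x) x)
    (L : ℝ) (hL : 0 < L) (hlipf : LipschitzWith (Real.toNNReal L) f')
    (u : H → X → ℝ)
    (hu : ∀ lam x, u lam x = sInf {r | ∃ y, (x, y) ∈ Z ∧ r = ⟪lam, g (x, y)⟫})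
    (dom : Set H)
    (hdom : dom = {lam | BddAbove (Set.range fun x => ⟪lam, x⟫ - f x)})
    (fstar : H → ℝ)
    (hfstar : ∀ lam ∈ dom, fstar lam = sSup (Set.range fun x => ⟪lam, x⟫ - f x))
    (m : Measure X) [IsProbabilityMeasure m]
    (D : H → ℝ) (hD : ∀ lam, D lam = fstar lam - ∫ x, u lam x ∂m)
    (lam0 : H) (hlam0 : lam0 ∈ dom) (p0 : H)
    (hp0 : ∀ lam ∈ dom, fstar lam0 + ⟪p0, lam - lam0⟫ ≤ fstar lam) :
    StrongConvexOn dom (1 / L) D ∧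
    ∃ lamstar : H, (lamstar ∈ dom ∧ ∀ lam ∈ dom, D lamstar ≤ D lam) ∧
      (∀ lam' ∈ dom, (∀ lam ∈ dom, D lam' ≤ D lam) → lam' = lamstar) ∧
      ‖lamstar‖ ≤ 3 * ‖lam0‖ + 2 * L * (M + ‖p0‖) :=
  stmt_15_general Z hZne g M hM Lg hZlip f f' hdiff L hL hlipf u hu dom hdom fstar hfstar m D hD
    lam0 hlam0 p0 hp0
end

section
/- Let λ*(m) be the unique minimizer of the (1/L)-strongly convex dual functional D_m(λ) = f*(λ) − ∫_X u_λ dm on dom(f*), and suppose ‖λ*(m)‖ ≤ C* for all m and that λ ↦ u_λ(x) makes x ↦ u_λ(x) (C* L_g)-Lipschitz for ‖λ‖ ≤ C*. Then for all probability measures m₀, m₁: |D_{m₀}(λ*(m₀)) − D_{m₁}(λ*(m₁))| ≤ C* L_g d₁(m₀, m₁) and ‖λ*(m₀) − λ*(m₁)‖² ≤ 2 C* L_g L d₁(m₀, m₁). -/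
/-!
For `‖λ‖ ≤ C*` the functionals `D_{m₀}` and `D_{m₁}` differ at `λ` by `∫ u_λ d(m₁ - m₀)`, which is
at most `ε := C* L_g d₁(m₀, m₁)` in absolute value because `u_λ / (C* L_g)` is a 1-Lipschitz test
function. Exchanging the marginals at the minimizers, `D_{m₀}(λ₀) ≤ D_{m₀}(λ₁) ≤ D_{m₁}(λ₁) + ε`
and symmetrically. Adding the quadratic growth inequalities
`D_{mᵢ}(λᵢ) + ‖λ₀ - λ₁‖² / 2L ≤ D_{mᵢ}(λⱼ)` of the two strongly convex functionals gives
`‖λ₀ - λ₁‖² / L ≤ 2ε`.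
-/

open MeasureTheory Filter Topology
open scoped NNReal

theorem StrongConvexOn.add_mul_sq_norm_sub_le_of_isMinOn {H : Type*} [NormedAddCommGroup H]
    [NormedSpace ℝ H] {s : Set H} {μ : ℝ} {f : H → ℝ} (hf : StrongConvexOn s μ f) {x y : H}
    (hmin : IsMinOn f s x) (hx : x ∈ s) (hy : y ∈ s) :
    f x + μ / 2 * ‖x - y‖ ^ 2 ≤ f y := by
  set c := μ / 2 * ‖x - y‖ ^ 2
  -- minimality at `t • y + (1 - t) • x`, divided by `t`; then let `t → 0`
  have hsegment : ∀ t ∈ Set.Ioo (0 : ℝ) 1, (1 - t) * c ≤ f y - f x := by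
    rintro t ⟨ht0, ht1⟩
    have hconv := hf.2 hy hx ht0.le (sub_nonneg.2 ht1.le) (add_sub_cancel t 1)
    have hle := isMinOn_iff.1 hmin _ (hf.1 hy hx ht0.le (sub_nonneg.2 ht1.le) (add_sub_cancel t 1))
    rw [norm_sub_rev] at hconv
    simp only [smul_eq_mul] at hconv
    have : t * f x ≤ t * (f y - (1 - t) * c) := by simp only [c]; linarith
    linarith [le_of_mul_le_mul_left this ht0]
  have hlim : Tendsto (fun t : ℝ => (1 - t) * c) (𝓝[>] 0) (𝓝 c) := by
    have : Continuous fun t : ℝ => (1 - t) * c := by fun_prop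
    simpa using (this.tendsto 0).mono_left nhdsWithin_le_nhds
  have hev : ∀ᶠ t in 𝓝[>] (0 : ℝ), (1 - t) * c ≤ f y - f x :=
    eventually_of_mem (Ioo_mem_nhdsGT zero_lt_one) hsegment
  linarith [le_of_tendsto hlim hev]

theorem abs_sub_le_of_isMinOn {α : Type*} {s : Set α} {f g : α → ℝ} {a b : α} {ε : ℝ}
    (hf : IsMinOn f s a) (hg : IsMinOn g s b) (ha : a ∈ s) (hb : b ∈ s)
    (hfga : |f a - g a| ≤ ε) (hfgb : |f b - g b| ≤ ε) : |f a - g b| ≤ ε := by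
  have h₁ := isMinOn_iff.1 hf b hb
  have h₂ := isMinOn_iff.1 hg a ha
  rw [abs_le] at *
  constructor <;> linarith [hfga.1, hfgb.2]

theorem StrongConvexOn.mul_sq_norm_sub_le_of_isMinOn {H : Type*} [NormedAddCommGroup H]
    [NormedSpace ℝ H] {s : Set H} {μ ε : ℝ} {f g : H → ℝ} (hf : StrongConvexOn s μ f)
    (hg : StrongConvexOn s μ g) {a b : H} (hfa : IsMinOn f s a) (hgb : IsMinOn g s b)
    (ha : a ∈ s) (hb : b ∈ s) (hfga : |f a - g a| ≤ ε) (hfgb : |f b - g b| ≤ ε) :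
    μ * ‖a - b‖ ^ 2 ≤ 2 * ε := by
  have h₁ := hf.add_mul_sq_norm_sub_le_of_isMinOn hfa ha hb
  have h₂ := hg.add_mul_sq_norm_sub_le_of_isMinOn hgb hb ha
  rw [norm_sub_rev] at h₂
  linarith [neg_abs_le (f a - g a), le_abs_self (f b - g b)]

section KantorovichRubinstein

variable {X : Type*} [PseudoMetricSpace X] [MeasurableSpace X] [OpensMeasurableSpace X]

theorem LipschitzWith.integrable_of_integrable_dist {K : ℝ≥0} {F : X → ℝ}
    (hF : LipschitzWith K F) {μ : Measure X} [IsFiniteMeasure μ] {x₀ : X}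
    (h : Integrable (fun x => dist x x₀) μ) : Integrable F μ := by
  refine Integrable.mono' ((integrable_const |F x₀|).add (h.const_mul K))
    hF.continuous.aestronglyMeasurable (ae_of_all _ fun x => ?_)
  have := hF.dist_le_mul x x₀
  rw [Pi.add_apply, Real.norm_eq_abs, Real.dist_eq] at *
  linarith [abs_sub_abs_le_abs_sub (F x) (F x₀)]

theorem LipschitzWith.abs_integral_sub_le {K : ℝ≥0} {F : X → ℝ} (hF : LipschitzWith K F)
    {μ : Measure X} [IsProbabilityMeasure μ] {x₀ : X}
    (h : Integrable (fun x => dist x x₀) μ) :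
    |∫ x, F x ∂μ - F x₀| ≤ K * ∫ x, dist x x₀ ∂μ := by
  have hFint := hF.integrable_of_integrable_dist h
  calc |∫ x, F x ∂μ - F x₀| = |∫ x, (F x - F x₀) ∂μ| := by
        rw [integral_sub hFint (integrable_const _), integral_const, probReal_univ, one_smul]
    _ ≤ ∫ x, |F x - F x₀| ∂μ := abs_integral_le_integral_abs
    _ ≤ ∫ x, K * dist x x₀ ∂μ :=
        integral_mono (hFint.sub (integrable_const _)).abs (h.const_mul _) fun x => by
          simpa [Real.dist_eq] using hF.dist_le_mul x x₀
    _ = K * ∫ x, dist x x₀ ∂μ := integral_const_mul _ _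

/-- `d₁(m₀, m₁)`. Without first moments the supremum is unbounded and `sSup` returns the junk
value `0`. -/
noncomputable def kantorovichRubinstein (m₀ m₁ : Measure X) : ℝ :=
  sSup {r | ∃ F : X → ℝ, LipschitzWith 1 F ∧ r = ∫ x, F x ∂m₀ - ∫ x, F x ∂m₁}

variable {m₀ m₁ : Measure X} [IsProbabilityMeasure m₀] [IsProbabilityMeasure m₁]

theorem bddAbove_lipschitz_integral_sub (hm₀ : ∃ x₀ : X, Integrable (fun x => dist x x₀) m₀)
    (hm₁ : ∃ x₁ : X, Integrable (fun x => dist x x₁) m₁) :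
    BddAbove {r | ∃ F : X → ℝ, LipschitzWith 1 F ∧ r = ∫ x, F x ∂m₀ - ∫ x, F x ∂m₁} := by
  obtain ⟨x₀, h₀⟩ := hm₀
  obtain ⟨x₁, h₁⟩ := hm₁
  refine ⟨∫ x, dist x x₀ ∂m₀ + dist x₀ x₁ + ∫ x, dist x x₁ ∂m₁, ?_⟩
  rintro r ⟨F, hF, rfl⟩
  have hF₀ := abs_le.1 (hF.abs_integral_sub_le h₀)
  have hF₁ := abs_le.1 (hF.abs_integral_sub_le h₁)
  have hF₀₁ := hF.le_add_mul x₀ x₁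
  simp only [NNReal.coe_one, one_mul] at *
  linarith [hF₀.2, hF₁.1]

theorem integral_sub_integral_le_mul_kantorovichRubinstein
    (hm₀ : ∃ x₀ : X, Integrable (fun x => dist x x₀) m₀)
    (hm₁ : ∃ x₁ : X, Integrable (fun x => dist x x₁) m₁) {K : ℝ≥0} {F : X → ℝ}
    (hF : LipschitzWith K F) :
    ∫ x, F x ∂m₀ - ∫ x, F x ∂m₁ ≤ K * kantorovichRubinstein m₀ m₁ := by
  rcases eq_zero_or_pos K with rfl | hK
  · obtain ⟨x₀, h₀⟩ := hm₀
    obtain ⟨x₁, h₁⟩ := hm₁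
    have hF₀ := hF.abs_integral_sub_le h₀
    have hF₁ := hF.abs_integral_sub_le h₁
    have hF₀₁ := hF.dist_le_mul x₀ x₁
    simp only [NNReal.coe_zero, zero_mul, abs_nonpos_iff, sub_eq_zero, dist_le_zero] at *
    rw [hF₀, hF₁, hF₀₁, sub_self]
  · have hG : LipschitzWith 1 fun x => (K : ℝ)⁻¹ • F x := by
      have := (lipschitzWith_smul (K : ℝ)⁻¹).comp hF
      rwa [nnnorm_inv, NNReal.nnnorm_eq, inv_mul_cancel₀ hK.ne'] at this
    have := le_csSup (bddAbove_lipschitz_integral_sub hm₀ hm₁) ⟨_, hG, rfl⟩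
    rwa [integral_smul, integral_smul, ← smul_sub, smul_eq_mul,
      inv_mul_le_iff₀ (NNReal.coe_pos.2 hK)] at this

theorem abs_integral_sub_integral_le_mul_kantorovichRubinstein
    (hm₀ : ∃ x₀ : X, Integrable (fun x => dist x x₀) m₀)
    (hm₁ : ∃ x₁ : X, Integrable (fun x => dist x x₁) m₁) {K : ℝ≥0} {F : X → ℝ}
    (hF : LipschitzWith K F) :
    |∫ x, F x ∂m₀ - ∫ x, F x ∂m₁| ≤ K * kantorovichRubinstein m₀ m₁ := by
  have h := integral_sub_integral_le_mul_kantorovichRubinstein hm₀ hm₁ hF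
  have hneg := integral_sub_integral_le_mul_kantorovichRubinstein hm₀ hm₁ hF.neg
  simp only [Pi.neg_apply, integral_neg] at hneg
  exact abs_le.2 ⟨by linarith, h⟩

end KantorovichRubinstein

theorem stmt_17_general {X H : Type*}
    [MetricSpace X] [MeasurableSpace X] [BorelSpace X]
    [NormedAddCommGroup H] [InnerProductSpace ℝ H]
    (dom : Set H)
    (phi : H → ℝ) (u : H → X → ℝ)
    (L : ℝ) (hL : 0 < L) (Cstar Lg : ℝ) (hCstar : 0 ≤ Cstar) (hLg : 0 ≤ Lg)
    (m0 m1 : Measure X) [IsProbabilityMeasure m0] [IsProbabilityMeasure m1]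
    (hm0 : ∃ x₀ : X, Integrable (fun x => dist x x₀) m0)
    (hm1 : ∃ x₀ : X, Integrable (fun x => dist x x₀) m1)
    (D : Measure X → H → ℝ)
    (hD : ∀ (m : Measure X) (lam : H), D m lam = phi lam - ∫ x, u lam x ∂m)
    (hs0 : StrongConvexOn dom (1 / L) (D m0))
    (hs1 : StrongConvexOn dom (1 / L) (D m1))
    (lamstar0 lamstar1 : H)
    (h0 : lamstar0 ∈ dom ∧ ∀ lam ∈ dom, D m0 lamstar0 ≤ D m0 lam)
    (h1 : lamstar1 ∈ dom ∧ ∀ lam ∈ dom, D m1 lamstar1 ≤ D m1 lam)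
    (hb0 : ‖lamstar0‖ ≤ Cstar) (hb1 : ‖lamstar1‖ ≤ Cstar)
    (hulip : ∀ lam : H, ‖lam‖ ≤ Cstar →
      LipschitzWith (Real.toNNReal (Cstar * Lg)) (u lam))
    (d1 : ℝ)
    (hd1 : d1 = sSup {r | ∃ F : X → ℝ, LipschitzWith 1 F ∧
      r = ∫ x, F x ∂m0 - ∫ x, F x ∂m1}) :
    |D m0 lamstar0 - D m1 lamstar1| ≤ Cstar * Lg * d1 ∧
    ‖lamstar0 - lamstar1‖ ^ 2 ≤ 2 * Cstar * Lg * L * d1 := by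
  change d1 = kantorovichRubinstein m0 m1 at hd1
  have hgap : ∀ lam : H, ‖lam‖ ≤ Cstar → |D m0 lam - D m1 lam| ≤ Cstar * Lg * d1 := by
    intro lam hlam
    have := abs_integral_sub_integral_le_mul_kantorovichRubinstein hm0 hm1 (hulip lam hlam)
    rwa [Real.coe_toNNReal _ (mul_nonneg hCstar hLg), ← hd1, abs_sub_comm,
      ← sub_sub_sub_cancel_left _ _ (phi lam), ← hD, ← hD] at this
  have hmin0 : IsMinOn (D m0) dom lamstar0 := isMinOn_iff.2 h0.2
  have hmin1 : IsMinOn (D m1) dom lamstar1 := isMinOn_iff.2 h1.2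
  refine ⟨abs_sub_le_of_isMinOn hmin0 hmin1 h0.1 h1.1 (hgap _ hb0) (hgap _ hb1), ?_⟩
  have := hs0.mul_sq_norm_sub_le_of_isMinOn hs1 hmin0 hmin1 h0.1 h1.1 (hgap _ hb0) (hgap _ hb1)
  rw [one_div, inv_mul_le_iff₀ hL] at this
  linarith

/-- Stability of the dual problem: the optimal dual values are Lipschitz in `m` and the
dual minimizers are ½-Hölder in `m` with respect to the Kantorovich–Rubinstein
distance. -/
theorem stmt_17 {X H : Type*}
    [MetricSpace X] [MeasurableSpace X] [BorelSpace X]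
    [NormedAddCommGroup H] [InnerProductSpace ℝ H] [CompleteSpace H]
    (dom : Set H) (hdomc : Convex ℝ dom)
    (phi : H → ℝ) (u : H → X → ℝ)
    (L : ℝ) (hL : 0 < L) (Cstar Lg : ℝ) (hCstar : 0 ≤ Cstar) (hLg : 0 ≤ Lg)
    (m0 m1 : Measure X) [IsProbabilityMeasure m0] [IsProbabilityMeasure m1]
    (hm0 : ∃ x₀ : X, Integrable (fun x => dist x x₀) m0)
    (hm1 : ∃ x₀ : X, Integrable (fun x => dist x x₀) m1)
    (D : Measure X → H → ℝ)
    (hD : ∀ (m : Measure X) (lam : H), D m lam = phi lam - ∫ x, u lam x ∂m)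
    (hs0 : StrongConvexOn dom (1 / L) (D m0))
    (hs1 : StrongConvexOn dom (1 / L) (D m1))
    (lamstar0 lamstar1 : H)
    (h0 : lamstar0 ∈ dom ∧ ∀ lam ∈ dom, D m0 lamstar0 ≤ D m0 lam)
    (h1 : lamstar1 ∈ dom ∧ ∀ lam ∈ dom, D m1 lamstar1 ≤ D m1 lam)
    (hb0 : ‖lamstar0‖ ≤ Cstar) (hb1 : ‖lamstar1‖ ≤ Cstar)
    (hulip : ∀ lam : H, ‖lam‖ ≤ Cstar →
      LipschitzWith (Real.toNNReal (Cstar * Lg)) (u lam))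
    (huint : ∀ lam : H, ‖lam‖ ≤ Cstar →
      Integrable (u lam) m0 ∧ Integrable (u lam) m1)
    (d1 : ℝ)
    (hd1 : d1 = sSup {r | ∃ F : X → ℝ, LipschitzWith 1 F ∧
      r = ∫ x, F x ∂m0 - ∫ x, F x ∂m1}) :
    |D m0 lamstar0 - D m1 lamstar1| ≤ Cstar * Lg * d1 ∧
    ‖lamstar0 - lamstar1‖ ^ 2 ≤ 2 * Cstar * Lg * L * d1 :=
  stmt_17_general dom phi u L hL Cstar Lg hCstar hLg m0 m1 hm0 hm1 D hD hs0 hs1 lamstar0 lamstar1 h0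
    h1 hb0 hb1 hulip d1 hd1
end
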